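/- arXiv:1909.07682 — 6 statements merged into one kernel-verified Lean document; each statement's English description precedes it below -/
import Mathlib

section
/- For any nonnegative integers k and ℓ, and indices j₁,…,j_k ∈ {1,…,n}, the operator identity ⟨ξ,∂_x⟩^ℓ ∘ ∂^k/∂ξ^{j₁}⋯∂ξ^{j_k} = σ(j₁…j_k) Σ_{p=0}^{k} (−1)^p C(k,p) (ℓ!/(ℓ−p)!) ∂^k/∂x^{j₁}⋯∂x^{j_p}∂ξ^{j_{p+1}}⋯∂ξ^{j_k} ∘ ⟨ξ,∂_x⟩^{ℓ−p} holds on C^∞(ℝⁿ×ℝⁿ), with the convention ⟨ξ,∂_x⟩^r = 0 for r<0. -/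
open scoped ContDiff


/-- Partial derivative in the `i`-th `x`-direction for functions of `(x,ξ) ∈ ℝⁿ×ℝⁿ`. -/
noncomputable def pdx (n : ℕ) (i : Fin n) (ψ : (Fin n → ℝ) × (Fin n → ℝ) → ℝ) :
    (Fin n → ℝ) × (Fin n → ℝ) → ℝ :=
  fun p => fderiv ℝ ψ p (Pi.single i 1, 0)

/-- Partial derivative in the `i`-th `ξ`-direction. -/
noncomputable def pdxi (n : ℕ) (i : Fin n) (ψ : (Fin n → ℝ) × (Fin n → ℝ) → ℝ) :
    (Fin n → ℝ) × (Fin n → ℝ) → ℝ :=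
  fun p => fderiv ℝ ψ p (0, Pi.single i 1)

/-- The operator `⟨ξ,∂ₓ⟩ = Σ_p ξ^p ∂/∂x^p`. -/
noncomputable def Dx (n : ℕ) (ψ : (Fin n → ℝ) × (Fin n → ℝ) → ℝ) :
    (Fin n → ℝ) × (Fin n → ℝ) → ℝ :=
  fun p => ∑ q : Fin n, p.2 q * pdx n q ψ p

/-- Mixed iterated derivative `∂^k/∂x^{j₁}…∂x^{j_q}∂ξ^{j_{q+1}}…∂ξ^{j_k}` along the
multi-index `I`: the first `q` slots are `x`-derivatives, the rest `ξ`-derivatives. -/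
noncomputable def mixedD (n k : ℕ) (q : ℕ) (I : Fin k → Fin n)
    (ψ : (Fin n → ℝ) × (Fin n → ℝ) → ℝ) : (Fin n → ℝ) × (Fin n → ℝ) → ℝ :=
  (List.finRange k).foldr
    (fun (a : Fin k) acc => if (a : ℕ) < q then pdx n (I a) acc else pdxi n (I a) acc) ψ

/-- Symmetrization (averaging over permutations) of a tensor-indexed family of functions. -/
noncomputable def symAvg (n k : ℕ)
    (T : (Fin k → Fin n) → (Fin n → ℝ) × (Fin n → ℝ) → ℝ) (I : Fin k → Fin n) :
    (Fin n → ℝ) × (Fin n → ℝ) → ℝ :=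
  fun p => ((Nat.factorial k : ℝ))⁻¹ * ∑ π : Equiv.Perm (Fin k), T (I ∘ π) p

/-- The John operator `J_{ij} = ∂²/∂x^i∂ξ^j − ∂²/∂x^j∂ξ^i`. -/
noncomputable def john (n : ℕ) (i j : Fin n) (ψ : (Fin n → ℝ) × (Fin n → ℝ) → ℝ) :
    (Fin n → ℝ) × (Fin n → ℝ) → ℝ :=
  fun p => pdx n i (pdxi n j ψ) p - pdx n j (pdxi n i ψ) p

/-- Iterated John operators `J_{i₁j₁}⋯J_{i_rj_r}`. -/
noncomputable def iterJohn (n r : ℕ) (I J : Fin r → Fin n)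
    (ψ : (Fin n → ℝ) × (Fin n → ℝ) → ℝ) : (Fin n → ℝ) × (Fin n → ℝ) → ℝ :=
  (List.finRange r).foldr (fun a acc => john n (I a) (J a) acc) ψ

abbrev V (n : ℕ) := (Fin n → ℝ) × (Fin n → ℝ)

/-- generic directional derivative -/
noncomputable def pd (n : ℕ) (v : V n) (ψ : V n → ℝ) : V n → ℝ :=
  fun p => fderiv ℝ ψ p v

theorem one_le_inf : (1:WithTop ℕ∞) ≤ ∞ := WithTop.coe_le_coe.2 le_top

theorem contDiff_pd {n : ℕ} (v : V n) {ψ : V n → ℝ} (hψ : ContDiff ℝ ∞ ψ) :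
    ContDiff ℝ ∞ (pd n v ψ) := by
  exact (hψ.fderiv_right (by simp)).clm_apply contDiff_const

theorem pd_comm {n : ℕ} (v w : V n) {ψ : V n → ℝ} (hψ : ContDiff ℝ ∞ ψ) :
    pd n v (pd n w ψ) = pd n w (pd n v ψ) := by
  funext p
  have hsymm : IsSymmSndFDerivAt ℝ ψ p :=
    hψ.contDiffAt.isSymmSndFDerivAt (by rw [minSmoothness_of_isRCLikeNormedField]; exact WithTop.coe_le_coe.2 le_top)
  have hd : DifferentiableAt ℝ (fderiv ℝ ψ) p :=
    ((hψ.fderiv_right (m := ∞) (by simp)).differentiable (by simp)) p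
  have key : ∀ u : V n, fderiv ℝ (fun y => fderiv ℝ ψ y u) p
      = (fderiv ℝ (fderiv ℝ ψ) p).flip u := by
    intro u
    have h1 : HasFDerivAt (fun y => fderiv ℝ ψ y u)
        ((fderiv ℝ (fderiv ℝ ψ) p).flip u) p := by
      have := hd.hasFDerivAt.clm_apply (hasFDerivAt_const u p)
      simpa using this
    exact h1.fderiv
  show fderiv ℝ (fun y => fderiv ℝ ψ y w) p v = fderiv ℝ (fun y => fderiv ℝ ψ y v) p w
  rw [key w, key v]
  exact hsymm v w

theorem diffAt {n : ℕ} {ψ : V n → ℝ} (hψ : ContDiff ℝ ∞ ψ) (p : V n) :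
    DifferentiableAt ℝ ψ p := (hψ.differentiable (by simp)) p

theorem pd_sum {n : ℕ} (v : V n) {ι : Type*} (s : Finset ι) (f : ι → V n → ℝ)
    (hf : ∀ i ∈ s, ContDiff ℝ ∞ (f i)) :
    pd n v (fun p => ∑ i ∈ s, f i p) = fun p => ∑ i ∈ s, pd n v (f i) p := by
  funext p
  show fderiv ℝ _ p v = _
  rw [fderiv_fun_sum (fun i hi => diffAt (hf i hi) p)]
  simp [pd]

theorem pd_const_mul {n : ℕ} (v : V n) (c : ℝ) {f : V n → ℝ} (hf : ContDiff ℝ ∞ f) :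
    pd n v (fun p => c * f p) = fun p => c * pd n v f p := by
  funext p
  show fderiv ℝ _ p v = _
  rw [fderiv_const_mul (diffAt hf p)]
  simp [pd]

theorem pd_sub {n : ℕ} (v : V n) {f g : V n → ℝ} (hf : ContDiff ℝ ∞ f)
    (hg : ContDiff ℝ ∞ g) :
    pd n v (fun p => f p - g p) = fun p => pd n v f p - pd n v g p := by
  funext p
  show fderiv ℝ _ p v = _
  rw [fderiv_fun_sub (diffAt hf p) (diffAt hg p)]
  simp [pd]

theorem pd_zero_fun {n : ℕ} (v : V n) : pd n v (fun _ => (0:ℝ)) = fun _ => 0 := by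
  funext p; show fderiv ℝ _ p v = 0
  rw [fderiv_fun_const]; simp

theorem pd_zero_vec {n : ℕ} (F : V n → ℝ) : pd n (0, 0) F = fun _ => 0 := by
  funext p; show fderiv ℝ F p (0, 0) = 0
  have : ((0,0) : V n) = 0 := rfl
  rw [this, map_zero]

/-- the continuous linear map `p ↦ p.2 q` -/
noncomputable def Lq (n : ℕ) (q : Fin n) : V n →L[ℝ] ℝ :=
  (ContinuousLinearMap.proj q).comp (ContinuousLinearMap.snd ℝ (Fin n → ℝ) (Fin n → ℝ))

theorem Dx_eq (n : ℕ) (ψ : V n → ℝ) :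
    Dx n ψ = fun p => ∑ q : Fin n, p.2 q * pd n (Pi.single q 1, 0) ψ p := rfl

theorem contDiff_Dx {n : ℕ} {ψ : V n → ℝ} (hψ : ContDiff ℝ ∞ ψ) :
    ContDiff ℝ ∞ (Dx n ψ) := by
  rw [Dx_eq]
  apply ContDiff.sum
  intro q _
  exact ((Lq n q).contDiff).mul (contDiff_pd _ hψ)

theorem pd_Dx {n : ℕ} (v : V n) {ψ : V n → ℝ} (hψ : ContDiff ℝ ∞ ψ) :
    pd n v (Dx n ψ) = fun p =>
      Dx n (pd n v ψ) p + ∑ q : Fin n, v.2 q * pd n (Pi.single q 1, 0) ψ p := by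
  funext p
  show fderiv ℝ (Dx n ψ) p v = _
  have hdiff : ∀ q : Fin n, ∀ x : V n,
      DifferentiableAt ℝ (fun y : V n => y.2 q * pd n (Pi.single q 1, 0) ψ y) x := by
    intro q x
    exact ((Lq n q).differentiable.differentiableAt).mul
      (diffAt (contDiff_pd _ hψ) x)
  have h1 : fderiv ℝ (Dx n ψ) p v
      = ∑ q : Fin n, fderiv ℝ (fun y : V n => y.2 q * pd n (Pi.single q 1, 0) ψ y) p v := by
    rw [Dx_eq]
    rw [fderiv_fun_sum (fun q _ => hdiff q p)]
    simp
  rw [h1]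
  have h2 : ∀ q : Fin n, fderiv ℝ (fun y : V n => y.2 q * pd n (Pi.single q 1, 0) ψ y) p v
      = p.2 q * pd n v (pd n (Pi.single q 1, 0) ψ) p + pd n (Pi.single q 1, 0) ψ p * v.2 q := by
    intro q
    have hL : fderiv ℝ (fun y : V n => y.2 q) p = Lq n q := (Lq n q).fderiv
    have := fderiv_fun_mul (𝕜 := ℝ) (c := fun y : V n => y.2 q)
      (d := pd n (Pi.single q 1, 0) ψ) (x := p)
      ((Lq n q).differentiable.differentiableAt) (diffAt (contDiff_pd _ hψ) p)
    rw [this]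
    simp [hL, pd, Lq, smul_eq_mul]
  simp_rw [h2]
  rw [Finset.sum_add_distrib]
  congr 1
  · rw [Dx_eq]
    congr 1
    funext q
    rw [pd_comm _ _ hψ]
  · congr 1; funext q; ring

theorem pd_x_sum {n : ℕ} (v : V n) (F : V n → ℝ) :
    pd n (v.2, 0) F = fun p => ∑ q : Fin n, v.2 q * pd n (Pi.single q 1, 0) F p := by
  funext p
  show fderiv ℝ F p _ = _
  have hv : ((v.2, (0:Fin n → ℝ)) : V n) = ∑ q : Fin n, v.2 q • ((Pi.single q 1, 0) : V n) := by
    rw [Prod.ext_iff]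
    constructor
    · simp only [Prod.fst_sum]
      rw [show (∑ q : Fin n, (v.2 q • ((Pi.single q 1, 0) : V n)).1)
          = ∑ q : Fin n, Pi.single q (v.2 q) by
        apply Finset.sum_congr rfl; intro q _
        simp [Prod.smul_def, ← Pi.single_smul]]
      exact (Finset.univ_sum_single v.2).symm
    · simp [Prod.snd_sum, Prod.smul_def]
  rw [hv, map_sum]
  apply Finset.sum_congr rfl
  intro q _
  rw [map_smul]
  simp [pd, smul_eq_mul]

theorem Dx_pd {n : ℕ} (v : V n) {F : V n → ℝ} (hF : ContDiff ℝ ∞ F) :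
    Dx n (pd n v F) = fun p => pd n v (Dx n F) p - pd n (v.2, 0) F p := by
  funext p
  rw [pd_Dx v hF, pd_x_sum]
  ring

noncomputable def pdList (n : ℕ) (L : List (V n)) (ψ : V n → ℝ) : V n → ℝ :=
  L.foldr (fun v acc => pd n v acc) ψ

@[simp] theorem pdList_nil {n : ℕ} (ψ : V n → ℝ) : pdList n [] ψ = ψ := rfl

@[simp] theorem pdList_cons {n : ℕ} (v : V n) (L : List (V n)) (ψ : V n → ℝ) :
    pdList n (v :: L) ψ = pd n v (pdList n L ψ) := rfl

theorem contDiff_pdList {n : ℕ} (L : List (V n)) {ψ : V n → ℝ} (hψ : ContDiff ℝ ∞ ψ) :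
    ContDiff ℝ ∞ (pdList n L ψ) := by
  induction L with
  | nil => exact hψ
  | cons v L ih => exact contDiff_pd _ ih

theorem pdList_perm {n : ℕ} {L L' : List (V n)} (h : L.Perm L') {ψ : V n → ℝ}
    (hψ : ContDiff ℝ ∞ ψ) : pdList n L ψ = pdList n L' ψ := by
  induction h with
  | nil => rfl
  | cons x _ ih => simp [ih]
  | swap x y l => exact pd_comm _ _ (contDiff_pdList l hψ)
  | trans _ _ ih1 ih2 => rw [ih1, ih2]

theorem Dx_pdList {n : ℕ} (L : List (V n)) {ψ : V n → ℝ} (hψ : ContDiff ℝ ∞ ψ) :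
    Dx n (pdList n L ψ) = fun p => pdList n L (Dx n ψ) p
      - ∑ a : Fin L.length, pdList n (((L.get a).2, 0) :: L.eraseIdx a) ψ p := by
  induction L with
  | nil => funext p; simp
  | cons v L ih =>
    have hLψ : ContDiff ℝ ∞ (pdList n L ψ) := contDiff_pdList L hψ
    rw [pdList_cons, Dx_pd v hLψ, ih]
    have hA : ContDiff ℝ ∞ (pdList n L (Dx n ψ)) := contDiff_pdList L (contDiff_Dx hψ)
    have hT : ∀ a : Fin L.length, ContDiff ℝ ∞ (pdList n (((L.get a).2, 0) :: L.eraseIdx a) ψ) :=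
      fun a => contDiff_pdList _ hψ
    rw [pd_sub v hA (ContDiff.sum (fun a _ => hT a))]
    rw [pd_sum v Finset.univ _ (fun a _ => hT a)]
    funext p
    simp only [List.length_cons]
    rw [Fin.sum_univ_succ]
    have h0 : pdList n ((((v :: L).get (0 : Fin (L.length+1))).2, 0)
          :: (v :: L).eraseIdx ((0 : Fin (L.length+1)) : ℕ)) ψ p
        = pd n (v.2, 0) (pdList n L ψ) p := rfl
    rw [h0]
    have hs : ∑ a : Fin L.length, pd n v (pdList n (((L.get a).2, 0) :: L.eraseIdx a) ψ) p
        = ∑ a : Fin L.length,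
          pdList n ((((v :: L).get (a.succ : Fin (L.length+1))).2, 0)
            :: (v :: L).eraseIdx ((a.succ : Fin (L.length+1)) : ℕ)) ψ p := by
      apply Finset.sum_congr rfl
      intro a _
      have hperm : (v :: (((L.get a).2, (0:Fin n → ℝ))) :: L.eraseIdx a).Perm
          ((((L.get a).2, 0)) :: v :: L.eraseIdx a) := List.Perm.swap _ _ _
      have h2 := pdList_perm hperm hψ
      have : pd n v (pdList n (((L.get a).2, 0) :: L.eraseIdx (a:ℕ)) ψ)
          = pdList n ((((L.get a).2, 0)) :: v :: L.eraseIdx (a:ℕ)) ψ := by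
        rw [← h2]; rfl
      rw [this]
      rfl
    show pd n v (pdList n L (Dx n ψ)) p - _ - _ = _
    rw [hs]
    simp only [pdList_cons]
    ring

noncomputable def gvec (n k q : ℕ) (I : Fin k → Fin n) : Fin k → V n :=
  fun a => if (a : ℕ) < q then (Pi.single (I a) 1, 0) else (0, Pi.single (I a) 1)

theorem mixedD_eq_pdList (n k q : ℕ) (I : Fin k → Fin n) (ψ : V n → ℝ) :
    mixedD n k q I ψ = pdList n ((List.finRange k).map (gvec n k q I)) ψ := by
  unfold mixedD pdList
  rw [List.foldr_map]
  congr 1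
  funext a acc
  by_cases h : (a : ℕ) < q <;> simp only [gvec, h, if_true, if_false] <;> rfl

theorem contDiff_mixedD {n k q : ℕ} (I : Fin k → Fin n) {ψ : V n → ℝ}
    (hψ : ContDiff ℝ ∞ ψ) : ContDiff ℝ ∞ (mixedD n k q I ψ) := by
  rw [mixedD_eq_pdList]; exact contDiff_pdList _ hψ

/-- decomposition of `finRange` around position `a` -/
theorem finRange_decomp {k : ℕ} (a : Fin k) :
    List.finRange k = (List.finRange k).take (a:ℕ) ++ a :: (List.finRange k).drop ((a:ℕ)+1) := by
  have h : ((a:ℕ)) < (List.finRange k).length := by simp [a.isLt]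
  conv_lhs => rw [← List.take_append_drop (a:ℕ) (List.finRange k)]
  rw [List.drop_eq_getElem_cons h]
  simp

theorem not_mem_take_drop {k : ℕ} (a : Fin k) :
    (a ∉ (List.finRange k).take (a:ℕ)) ∧ (a ∉ (List.finRange k).drop ((a:ℕ)+1)) := by
  have hnd := List.nodup_finRange k
  rw [finRange_decomp a] at hnd
  have := List.nodup_middle.mp (by simpa using hnd)
  rw [List.nodup_cons] at this
  constructor
  · intro hmem; exact this.1 (List.mem_append.mpr (Or.inl hmem))
  · intro hmem; exact this.1 (List.mem_append.mpr (Or.inr hmem))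

theorem cons_perm_map {α : Type*} {k : ℕ} (f f' : Fin k → α) (a : Fin k)
    (hne : ∀ j, j ≠ a → f j = f' j) :
    (f' a :: ((List.finRange k).map f).eraseIdx (a:ℕ)).Perm ((List.finRange k).map f') := by
  have hlen : ((a:ℕ)) < ((List.finRange k).map f).length := by simp [a.isLt]
  have htake : ((List.finRange k).take (a:ℕ)).map f = ((List.finRange k).take (a:ℕ)).map f' := by
    apply List.map_congr_left
    intro x hx
    apply hne
    intro hxa; exact (not_mem_take_drop a).1 (hxa ▸ hx)
  have hdrop : ((List.finRange k).drop ((a:ℕ)+1)).map f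
      = ((List.finRange k).drop ((a:ℕ)+1)).map f' := by
    apply List.map_congr_left
    intro x hx
    apply hne
    intro hxa; exact (not_mem_take_drop a).2 (hxa ▸ hx)
  have herase : ((List.finRange k).map f).eraseIdx (a:ℕ)
      = ((List.finRange k).take (a:ℕ)).map f' ++ ((List.finRange k).drop ((a:ℕ)+1)).map f' := by
    rw [List.eraseIdx_eq_take_drop_succ, ← List.map_take, ← List.map_drop, htake, hdrop]
  rw [herase]
  have hr : (List.finRange k).map f'
      = ((List.finRange k).take (a:ℕ)).map f' ++ f' a :: ((List.finRange k).drop ((a:ℕ)+1)).map f' := by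
    conv_lhs => rw [finRange_decomp a]
    simp
  rw [hr]
  exact List.perm_middle.symm

theorem key_perm {n k q : ℕ} (hq : q < k) (I : Fin k → Fin n) (b : Fin k) (hb : q ≤ (b:ℕ))
    {ψ : V n → ℝ} (hψ : ContDiff ℝ ∞ ψ) :
    pdList n ((Pi.single (I b) 1, 0) :: ((List.finRange k).map (gvec n k q I)).eraseIdx (b:ℕ)) ψ
      = mixedD n k (q+1) (I ∘ (Equiv.swap ⟨q, hq⟩ b)) ψ := by
  rw [mixedD_eq_pdList]
  set s := Equiv.swap (⟨q, hq⟩ : Fin k) b with hs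
  set f' : Fin k → V n := fun j =>
    if ((j:ℕ) < q ∨ j = b) then (Pi.single (I j) 1, 0) else (0, Pi.single (I j) 1) with hf'
  have hB : (gvec n k (q+1) (I ∘ s)) ∘ s = f' := by
    funext j
    have hss : s (s j) = j := Equiv.swap_apply_self _ _ _
    have hcond : ((s j : ℕ) < q + 1) ↔ ((j:ℕ) < q ∨ j = b) := by
      rcases eq_or_ne j ⟨q, hq⟩ with h | h
      · subst h
        rw [show s ⟨q,hq⟩ = b from Equiv.swap_apply_left _ _]
        simp only [Fin.ext_iff]
        constructor
        · intro h1; right; omega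
        · rintro (h1 | h1) <;> omega
      · rcases eq_or_ne j b with h2 | h2
        · subst h2
          rw [show s j = ⟨q,hq⟩ from Equiv.swap_apply_right _ _]
          simp
        · rw [show s j = j from Equiv.swap_apply_of_ne_of_ne h h2]
          have hne : (j:ℕ) ≠ q := fun hc => h (Fin.ext hc)
          constructor
          · intro h1; left; omega
          · rintro (h1 | h1); · omega
            · exact absurd h1 h2
    simp only [Function.comp_apply, gvec, hss, hf']
    by_cases hc : ((j:ℕ) < q ∨ j = b)
    · rw [if_pos (hcond.mpr hc), if_pos hc]
    · rw [if_neg (fun h => hc (hcond.mp h)), if_neg hc]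
  have hC : ∀ j, j ≠ b → gvec n k q I j = f' j := by
    intro j hj
    simp only [gvec, hf']
    by_cases h1 : (j:ℕ) < q
    · rw [if_pos h1, if_pos (Or.inl h1)]
    · rw [if_neg h1, if_neg (by rintro (h | h); exact h1 h; exact hj h)]
  have hfb : f' b = (Pi.single (I b) 1, 0) := by
    simp [hf']
  rw [show ((Pi.single (I b) 1, (0:Fin n → ℝ)) : V n)
      :: ((List.finRange k).map (gvec n k q I)).eraseIdx (b:ℕ)
      = f' b :: ((List.finRange k).map (gvec n k q I)).eraseIdx (b:ℕ) by rw [hfb]]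
  rw [pdList_perm (cons_perm_map (gvec n k q I) f' b hC) hψ]
  rw [← hB, ← List.map_map]
  exact pdList_perm ((Equiv.Perm.map_finRange_perm s).map (gvec n k (q+1) (I ∘ s))) hψ

theorem Dx_mixedD {n k q : ℕ} (hq : q < k) (I : Fin k → Fin n) {ψ : V n → ℝ}
    (hψ : ContDiff ℝ ∞ ψ) :
    Dx n (mixedD n k q I ψ) = fun p => mixedD n k q I (Dx n ψ) p
      - ∑ b : Fin k, (if q ≤ (b:ℕ)
          then mixedD n k (q+1) (I ∘ (Equiv.swap ⟨q, hq⟩ b)) ψ p else 0) := by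
  rw [mixedD_eq_pdList, Dx_pdList _ hψ, ← mixedD_eq_pdList]
  set L := (List.finRange k).map (gvec n k q I) with hL
  have hlen : L.length = k := by simp [hL]
  funext p
  congr 1
  apply Fintype.sum_equiv (finCongr hlen)
  intro a
  set b : Fin k := finCongr hlen a with hbdef
  have hba : (b : ℕ) = (a : ℕ) := rfl
  have hget : L.get a = gvec n k q I b := by
    simp only [hL, List.get_eq_getElem, List.getElem_map, List.getElem_finRange]
    congr 1
  by_cases hc : q ≤ (b : ℕ)
  · rw [if_pos hc]
    have h2 : (((L.get a).2, (0:Fin n → ℝ)) : V n) = (Pi.single (I b) 1, 0) := by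
      rw [hget]; simp only [gvec, if_neg (by omega : ¬ ((b:ℕ) < q))]
    rw [h2, show (a : ℕ) = (b : ℕ) from hba.symm]
    rw [key_perm hq I b hc hψ]
  · rw [if_neg hc]
    have h2 : ((L.get a).2, (0:Fin n → ℝ)) = ((0:Fin n → ℝ), (0:Fin n → ℝ)) := by
      rw [hget]; simp only [gvec, if_pos (by omega : (b:ℕ) < q)]
    rw [show pdList n (((L.get a).2, 0) :: L.eraseIdx (a:ℕ)) ψ p
        = pd n ((L.get a).2, 0) (pdList n (L.eraseIdx (a:ℕ)) ψ) p from rfl]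
    rw [h2, pd_zero_vec]

theorem Dx_mixedD_top {n k q : ℕ} (hq : k ≤ q) (I : Fin k → Fin n) {ψ : V n → ℝ}
    (hψ : ContDiff ℝ ∞ ψ) :
    Dx n (mixedD n k q I ψ) = mixedD n k q I (Dx n ψ) := by
  rw [mixedD_eq_pdList, Dx_pdList _ hψ, ← mixedD_eq_pdList]
  set L := (List.finRange k).map (gvec n k q I) with hL
  have hlen : L.length = k := by simp [hL]
  funext p
  rw [sub_eq_self]
  apply Finset.sum_eq_zero
  intro a _
  have hget : L.get a = gvec n k q I (finCongr hlen a) := by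
    simp only [hL, List.get_eq_getElem, List.getElem_map, List.getElem_finRange]
    congr 1
  have h2 : (((L.get a).2, (0:Fin n → ℝ)) : V n) = ((0:Fin n → ℝ), (0:Fin n → ℝ)) := by
    rw [hget]
    simp only [gvec, if_pos (show ((finCongr hlen a : Fin k) : ℕ) < q from lt_of_lt_of_le (finCongr hlen a).isLt hq)]
  rw [show pdList n (((L.get a).2, 0) :: L.eraseIdx (a:ℕ)) ψ p
      = pd n ((L.get a).2, 0) (pdList n (L.eraseIdx (a:ℕ)) ψ) p from rfl]
  rw [h2, pd_zero_vec]

theorem Dx_sum {n : ℕ} {ι : Type*} (s : Finset ι) (f : ι → V n → ℝ)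
    (hf : ∀ i ∈ s, ContDiff ℝ ∞ (f i)) :
    Dx n (fun p => ∑ i ∈ s, f i p) = fun p => ∑ i ∈ s, Dx n (f i) p := by
  funext p
  simp only [Dx_eq]
  simp only [pd_sum _ s f hf]
  simp only [Finset.mul_sum]
  exact Finset.sum_comm

theorem Dx_const_mul {n : ℕ} (c : ℝ) {f : V n → ℝ} (hf : ContDiff ℝ ∞ f) :
    Dx n (fun p => c * f p) = fun p => c * Dx n f p := by
  funext p
  simp only [Dx_eq]
  simp only [pd_const_mul _ c hf]
  rw [Finset.mul_sum]
  apply Finset.sum_congr rfl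
  intro q _
  ring

theorem Dx_zero (n : ℕ) : Dx n (fun _ => (0:ℝ)) = fun _ => 0 := by
  funext p
  simp only [Dx_eq]
  simp only [pd_zero_fun]
  simp

theorem contDiff_iterDx {n : ℕ} {ψ : V n → ℝ} (hψ : ContDiff ℝ ∞ ψ) (m : ℕ) :
    ContDiff ℝ ∞ ((Dx n)^[m] ψ) := by
  induction m with
  | zero => exact hψ
  | succ m ih => rw [Function.iterate_succ_apply']; exact contDiff_Dx ih

theorem mixedD_zero_perm {n k : ℕ} (J : Fin k → Fin n) (π : Equiv.Perm (Fin k))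
    {ψ : V n → ℝ} (hψ : ContDiff ℝ ∞ ψ) :
    mixedD n k 0 (J ∘ π) ψ = mixedD n k 0 J ψ := by
  rw [mixedD_eq_pdList, mixedD_eq_pdList]
  have hg : gvec n k 0 (J ∘ π) = gvec n k 0 J ∘ π := by
    funext a; simp [gvec]
  rw [hg, ← List.map_map]
  exact pdList_perm ((Equiv.Perm.map_finRange_perm π).map (gvec n k 0 J)) hψ

theorem card_ite_sum {k q : ℕ} (c : ℝ) :
    ∑ b : Fin k, (if q ≤ (b:ℕ) then c else 0) = ((k - q : ℕ) : ℝ) * c := by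
  rw [Fin.sum_univ_eq_sum_range (fun j => if q ≤ j then c else 0) k]
  rw [← Finset.sum_filter]
  have : Finset.filter (fun j => q ≤ j) (Finset.range k) = Finset.Ico q k := by
    ext j; simp [Finset.mem_filter, Finset.mem_range, Finset.mem_Ico]; omega
  rw [this, Finset.sum_const, Nat.card_Ico]
  simp [mul_comm]

theorem DS {n k : ℕ} (J : Fin k → Fin n) {ψ : V n → ℝ} (hψ : ContDiff ℝ ∞ ψ)
    (q m : ℕ) (hq : q ≤ k) :
    Dx n (fun p => ∑ π : Equiv.Perm (Fin k), mixedD n k q (J ∘ π) ((Dx n)^[m] ψ) p)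
      = fun p => (∑ π : Equiv.Perm (Fin k), mixedD n k q (J ∘ π) ((Dx n)^[m+1] ψ) p)
        - ((k - q : ℕ) : ℝ) * ∑ π : Equiv.Perm (Fin k), mixedD n k (q+1) (J ∘ π) ((Dx n)^[m] ψ) p := by
  have hφ : ContDiff ℝ ∞ ((Dx n)^[m] ψ) := contDiff_iterDx hψ m
  rw [Dx_sum Finset.univ _ (fun π _ => contDiff_mixedD _ hφ)]
  rcases lt_or_eq_of_le hq with hlt | heq
  · funext p
    have h1 : ∀ π : Equiv.Perm (Fin k),
        Dx n (mixedD n k q (J ∘ π) ((Dx n)^[m] ψ)) p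
        = mixedD n k q (J ∘ π) ((Dx n)^[m+1] ψ) p
          - ∑ b : Fin k, (if q ≤ (b:ℕ)
              then mixedD n k (q+1) ((J ∘ π) ∘ (Equiv.swap ⟨q, hlt⟩ b)) ((Dx n)^[m] ψ) p else 0) := by
      intro π
      rw [Dx_mixedD hlt (J ∘ π) hφ]
      rw [← Function.iterate_succ_apply' (Dx n) m ψ]
    simp only [h1]
    rw [Finset.sum_sub_distrib]
    congr 1
    rw [Finset.sum_comm]
    have h2 : ∀ b : Fin k,
        (∑ π : Equiv.Perm (Fin k), if q ≤ (b:ℕ)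
            then mixedD n k (q+1) ((J ∘ π) ∘ (Equiv.swap ⟨q, hlt⟩ b)) ((Dx n)^[m] ψ) p else 0)
        = (if q ≤ (b:ℕ)
            then ∑ π : Equiv.Perm (Fin k), mixedD n k (q+1) (J ∘ π) ((Dx n)^[m] ψ) p else 0) := by
      intro b
      by_cases hb : q ≤ (b:ℕ)
      · simp only [if_pos hb]
        have := Equiv.sum_comp (Equiv.mulRight (Equiv.swap (⟨q, hlt⟩ : Fin k) b))
          (fun π : Equiv.Perm (Fin k) => mixedD n k (q+1) (J ∘ π) ((Dx n)^[m] ψ) p)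
        rw [← this]
        apply Finset.sum_congr rfl
        intro π _
        rfl
      · simp only [if_neg hb, Finset.sum_const_zero]
    simp only [h2]
    rw [card_ite_sum]
  · funext p
    have hkq : k ≤ q := le_of_eq heq.symm
    have h1 : ∀ π : Equiv.Perm (Fin k), Dx n (mixedD n k q (J ∘ π) ((Dx n)^[m] ψ)) p
        = mixedD n k q (J ∘ π) ((Dx n)^[m+1] ψ) p := by
      intro π
      rw [Dx_mixedD_top hkq (J ∘ π) hφ, ← Function.iterate_succ_apply' (Dx n) m ψ]
    simp only [h1]
    have hz : ((k - q : ℕ) : ℝ) = 0 := by rw [heq]; simp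
    rw [hz, zero_mul, sub_zero]

noncomputable def ccoef (k ℓ q : ℕ) : ℝ :=
  (-1 : ℝ) ^ q * (k.choose q) * ((Nat.factorial ℓ : ℝ) / (Nat.factorial (ℓ - q) : ℝ))

theorem ccoef_eq_desc {k ℓ q : ℕ} (h : q ≤ ℓ) :
    ccoef k ℓ q = (-1 : ℝ) ^ q * (k.choose q) * ((ℓ.descFactorial q : ℕ) : ℝ) := by
  unfold ccoef
  have hfac : (ℓ - q).factorial * ℓ.descFactorial q = ℓ.factorial :=
    Nat.factorial_mul_descFactorial h
  have h1 : ((ℓ.factorial : ℕ) : ℝ) = ((ℓ - q).factorial : ℝ) * (ℓ.descFactorial q : ℝ) := by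
    rw [← hfac]; push_cast; ring
  rw [h1]
  field_simp

theorem ccoef_zero (k ℓ : ℕ) : ccoef k ℓ 0 = 1 := by
  simp [ccoef, Nat.factorial_ne_zero, div_self]

theorem K1 {k ℓ : ℕ} (r : ℕ) (h : r + 1 ≤ ℓ) :
    ccoef k (ℓ+1) (r+1) = ccoef k ℓ (r+1) - ((k - r : ℕ) : ℝ) * ccoef k ℓ r := by
  rw [ccoef_eq_desc (by omega : r + 1 ≤ ℓ + 1), ccoef_eq_desc h, ccoef_eq_desc (by omega : r ≤ ℓ)]
  rw [Nat.succ_descFactorial_succ, Nat.descFactorial_succ]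
  have hn : k.choose (r+1) * (ℓ+1) = k.choose (r+1) * (ℓ - r) + (k - r) * k.choose r := by
    rw [mul_comm (k - r) (k.choose r), ← Nat.choose_succ_right_eq]
    rw [← Nat.mul_add]
    congr 1
    omega
  have hn' : ((k.choose (r+1) * (ℓ+1) : ℕ) : ℝ)
      = ((k.choose (r+1) * (ℓ - r) + (k - r) * k.choose r : ℕ) : ℝ) := by exact_mod_cast hn
  push_cast at hn'
  push_cast
  ring_nf
  ring_nf at hn'
  linear_combination (-((-1:ℝ))^r) * (ℓ.descFactorial r : ℝ) * hn'

theorem K2 {k ℓ : ℕ} (h : ℓ < k) :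
    ccoef k (ℓ+1) (ℓ+1) = -(((k - ℓ : ℕ) : ℝ) * ccoef k ℓ ℓ) := by
  rw [ccoef_eq_desc (le_refl (ℓ+1)), ccoef_eq_desc (le_refl ℓ)]
  rw [Nat.succ_descFactorial_succ]
  have hn : k.choose (ℓ+1) * (ℓ+1) = (k - ℓ) * k.choose ℓ := by
    rw [mul_comm (k - ℓ) (k.choose ℓ), ← Nat.choose_succ_right_eq]
  have hn' : ((k.choose (ℓ+1) * (ℓ+1) : ℕ) : ℝ) = (((k - ℓ) * k.choose ℓ : ℕ) : ℝ) := by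
    exact_mod_cast hn
  push_cast at hn'
  push_cast
  ring_nf
  ring_nf at hn'
  linear_combination (-((-1:ℝ))^ℓ) * (ℓ.descFactorial ℓ : ℝ) * hn'

theorem main_formula (n k : ℕ) (J : Fin k → Fin n) (ψ : V n → ℝ) (hψ : ContDiff ℝ ∞ ψ) (ℓ : ℕ) :
    (Dx n)^[ℓ] (mixedD n k 0 J ψ) = fun p => ((Nat.factorial k : ℝ))⁻¹ *
      ∑ q ∈ Finset.range (k+1), (if q ≤ ℓ then
        ccoef k ℓ q * ∑ π : Equiv.Perm (Fin k), mixedD n k q (J ∘ π) ((Dx n)^[ℓ-q] ψ) p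
      else 0) := by
  induction ℓ with
  | zero =>
    funext p
    simp only [Nat.sub_self, Function.iterate_zero, id_eq, id]
    rw [Finset.sum_eq_single_of_mem 0 (Finset.mem_range.mpr (by omega))
      (fun b _ hb => by rw [if_neg (by omega)])]
    rw [if_pos (le_refl 0), ccoef_zero, one_mul]
    simp only [Nat.sub_self, Function.iterate_zero, id_eq]
    have hcongr : ∀ π ∈ (Finset.univ : Finset (Equiv.Perm (Fin k))),
        mixedD n k 0 (J ∘ π) ψ p = mixedD n k 0 J ψ p :=
      fun π _ => by rw [mixedD_zero_perm J π hψ]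
    rw [Finset.sum_congr rfl hcongr, Finset.sum_const, Finset.card_univ, Fintype.card_perm,
      Fintype.card_fin, nsmul_eq_mul, ← mul_assoc,
      inv_mul_cancel₀ (by exact_mod_cast Nat.factorial_ne_zero k), one_mul]
  | succ ℓ ih =>
    rw [Function.iterate_succ_apply', ih]
    have hS : ∀ q m : ℕ, ContDiff ℝ ∞
        (fun p => ∑ π : Equiv.Perm (Fin k), mixedD n k q (J ∘ π) ((Dx n)^[m] ψ) p) :=
      fun q m => ContDiff.sum (fun π _ => contDiff_mixedD _ (contDiff_iterDx hψ m))
    have hterm : ∀ q ∈ Finset.range (k+1), ContDiff ℝ ∞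
        (fun p => if q ≤ ℓ then
          ccoef k ℓ q * ∑ π : Equiv.Perm (Fin k), mixedD n k q (J ∘ π) ((Dx n)^[ℓ-q] ψ) p
        else 0) := by
      intro q _
      by_cases hq : q ≤ ℓ
      · simp only [if_pos hq]
        exact ContDiff.mul contDiff_const (hS q (ℓ-q))
      · simp only [if_neg hq]; exact contDiff_const
    rw [Dx_const_mul _ (ContDiff.sum hterm)]
    rw [Dx_sum _ _ hterm]
    funext p
    congr 1
    have hDxterm : ∀ q ∈ Finset.range (k+1),
        Dx n (fun p => if q ≤ ℓ then
          ccoef k ℓ q * ∑ π : Equiv.Perm (Fin k), mixedD n k q (J ∘ π) ((Dx n)^[ℓ-q] ψ) p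
        else 0) p
        = (if q ≤ ℓ then
            ccoef k ℓ q * ((∑ π : Equiv.Perm (Fin k), mixedD n k q (J ∘ π) ((Dx n)^[ℓ-q+1] ψ) p)
              - ((k - q : ℕ) : ℝ)
                * ∑ π : Equiv.Perm (Fin k), mixedD n k (q+1) (J ∘ π) ((Dx n)^[ℓ-q] ψ) p)
          else 0) := by
      intro q hq
      by_cases hql : q ≤ ℓ
      · simp only [if_pos hql]
        rw [Dx_const_mul _ (hS q (ℓ-q)), DS J hψ q (ℓ-q) (by have := Finset.mem_range.mp hq; omega)]
      · simp only [if_neg hql]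
        rw [Dx_zero]
    beta_reduce
    rw [Finset.sum_congr rfl hDxterm]
    -- now pure algebra
    set Sf : ℕ → ℕ → ℝ :=
      fun q m => ∑ π : Equiv.Perm (Fin k), mixedD n k q (J ∘ π) ((Dx n)^[m] ψ) p with hSf
    set A : ℕ → ℝ := fun q => if q ≤ ℓ then ccoef k ℓ q * Sf q (ℓ-q+1) else 0 with hA
    set B : ℕ → ℝ := fun q =>
      if q ≤ ℓ then ccoef k ℓ q * ((k - q : ℕ) : ℝ) * Sf (q+1) (ℓ-q) else 0 with hB
    have hsplit : ∀ q ∈ Finset.range (k+1),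
        (if q ≤ ℓ then ccoef k ℓ q * (Sf q (ℓ-q+1) - ((k - q : ℕ) : ℝ) * Sf (q+1) (ℓ-q)) else 0)
        = A q - B q := by
      intro q _
      by_cases hql : q ≤ ℓ
      · simp only [hA, hB, if_pos hql]; ring
      · simp only [hA, hB, if_neg hql]; ring
    rw [Finset.sum_congr rfl hsplit, Finset.sum_sub_distrib]
    have hBk : B k = 0 := by
      by_cases hkl : k ≤ ℓ
      · simp [hB, if_pos hkl]
      · simp [hB, if_neg hkl]
    have hBsum : ∑ q ∈ Finset.range (k+1), B q = ∑ q ∈ Finset.range (k+1),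
        (if 1 ≤ q then B (q-1) else 0) := by
      rw [Finset.sum_range_succ, hBk, add_zero, Finset.sum_range_succ']
      simp only [Nat.add_sub_cancel, if_pos (by omega : ∀ q : ℕ, 1 ≤ q + 1)]
      simp
    rw [hBsum, ← Finset.sum_sub_distrib]
    apply Finset.sum_congr rfl
    intro q hq
    have hqk : q ≤ k := by simp only [Finset.mem_range] at hq; omega
    match q with
    | 0 =>
      simp only [hA, if_pos (by omega : 0 ≤ ℓ), if_neg (by omega : ¬ (1:ℕ) ≤ 0), sub_zero,
        if_pos (by omega : 0 ≤ ℓ + 1), ccoef_zero, Nat.sub_zero]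
      rfl
    | (r+1) =>
      simp only [hA, hB, if_pos (by omega : 1 ≤ r + 1), Nat.add_sub_cancel]
      by_cases hr : r + 1 ≤ ℓ
      · have e1 : ℓ - (r+1) + 1 = ℓ - r := by omega
        have e2 : ℓ + 1 - (r+1) = ℓ - r := by omega
        rw [if_pos hr, if_pos (by omega : r + 1 ≤ ℓ + 1), if_pos (by omega : r ≤ ℓ), e1, e2]
        rw [K1 r hr]
        ring
      · rw [if_neg hr, zero_sub]
        by_cases hr2 : r ≤ ℓ
        · have hrl : r = ℓ := by omega
          subst hrl
          have hlk : r < k := by omega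
          simp only [if_pos hr2, if_pos (le_refl (r+1)), Nat.sub_self]
          rw [K2 hlk]
          ring
        · rw [if_neg hr2, if_neg (by omega : ¬ r + 1 ≤ ℓ + 1), neg_zero]

/-- Commutator formula for `⟨ξ,∂ₓ⟩^ℓ` with an iterated `ξ`-derivative (Lemma 2.2),
with the convention `⟨ξ,∂ₓ⟩^r = 0` for `r < 0` (encoded by the `if q ≤ ℓ` guard). -/
theorem stmt1 (n k ℓ : ℕ) (J : Fin k → Fin n)
    (ψ : (Fin n → ℝ) × (Fin n → ℝ) → ℝ) (hψ : ContDiff ℝ (⊤ : ℕ∞) ψ) :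
    (Dx n)^[ℓ] (mixedD n k 0 J ψ)
      = symAvg n k (fun J' p =>
          ∑ q ∈ Finset.range (k + 1),
            if q ≤ ℓ then
              ((-1 : ℝ) ^ q * (k.choose q) *
                  ((Nat.factorial ℓ : ℝ) / (Nat.factorial (ℓ - q) : ℝ))) *
                mixedD n k q J' ((Dx n)^[ℓ - q] ψ) p
            else 0) J := by
  have hsm : ContDiff ℝ ∞ ψ := hψ.of_le (by simp)
  rw [main_formula n k J ψ hsm ℓ]
  unfold symAvg
  funext p
  congr 1
  rw [Finset.sum_comm]
  apply Finset.sum_congr rfl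
  intro q _
  by_cases hq : q ≤ ℓ
  · simp only [if_pos hq, Finset.mul_sum]
    apply Finset.sum_congr rfl
    intro π _
    rfl
  · simp only [if_neg hq, Finset.sum_const_zero]
end

section
/- Let f be a Schwartz function on ℝⁿ and define (J^k f)(x,ξ) = ∫_{−∞}^{∞} t^k f(x+tξ) dt for (x,ξ) ∈ ℝⁿ×(ℝⁿ∖{0}). Then for all 0 ≤ ℓ ≤ k and indices j₁,…,j_ℓ, one has ∂^ℓ(J^k f)/∂x^{j₁}⋯∂x^{j_ℓ} = ∂^ℓ(J^{k−ℓ} f)/∂ξ^{j₁}⋯∂ξ^{j_ℓ}. -/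
open MeasureTheory

/-- The `k`-th momentum X-ray transform of a scalar function:
`(J^k f)(x,ξ) = ∫ t^k f(x+tξ) dt`. -/
noncomputable def Jmom (n k : ℕ) (f : SchwartzMap (Fin n → ℝ) ℝ) :
    (Fin n → ℝ) × (Fin n → ℝ) → ℝ :=
  fun p => ∫ t : ℝ, t ^ k * f (p.1 + t • p.2)

/-!
Since `∂/∂ξʲ f(x + tξ) = t ∂ⱼf(x + tξ)`, differentiating under the integral sign gives
`∂/∂xʲ J^k f = J^k (∂ⱼ f)` and `∂/∂ξʲ J^k f = J^{k+1} (∂ⱼ f)` on `ξ ≠ 0`. Differentiation under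
the integral is justified by domination: near a point with `ξ ≠ 0` the lines `t ↦ x + tξ` leave
every ball at a uniform linear rate, so the Schwartz decay of `f` and `∂f` along them beats any
power of `t`. Iterating, both sides of the identity equal `J^k (∂_{j₁} ⋯ ∂_{j_ℓ} f)`.
-/

open MeasureTheory Metric Filter Topology LineDeriv

section MomentIntegral

variable {E : Type*} [NormedAddCommGroup E] [NormedSpace ℝ E]

theorem SchwartzMap.exists_one_add_abs_pow_mul_norm_le {V : Type*} [NormedAddCommGroup V]
    [NormedSpace ℝ V] (m : ℕ) (g : SchwartzMap E V) (A : ℝ) :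
    ∃ D : ℝ, ∀ (t : ℝ) (y : E), 1 + |t| ≤ A * (1 + ‖y‖) →
      (1 + |t|) ^ m * ‖g y‖ ≤ D * (1 + t ^ 2)⁻¹ := by
  set C := 2 ^ (m + 2) * (Finset.Iic (m + 2, 0)).sup (fun p => SchwartzMap.seminorm ℝ p.1 p.2) g
  refine ⟨A ^ (m + 2) * C, fun t y hty => ?_⟩
  have hC : (1 + ‖y‖) ^ (m + 2) * ‖g y‖ ≤ C := by
    simpa using SchwartzMap.one_add_le_sup_seminorm_apply (𝕜 := ℝ) (m := (m + 2, 0)) le_rfl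
      le_rfl g y
  have hA : 0 ≤ A := by
    by_contra! hA
    nlinarith [abs_nonneg t, norm_nonneg y]
  have hsq : 1 + t ^ 2 ≤ (1 + |t|) ^ 2 := by nlinarith [sq_abs t, abs_nonneg t]
  rw [← div_eq_mul_inv, le_div_iff₀ (by positivity)]
  calc (1 + |t|) ^ m * ‖g y‖ * (1 + t ^ 2)
      ≤ (1 + |t|) ^ m * ‖g y‖ * (1 + |t|) ^ 2 := by gcongr
    _ = (1 + |t|) ^ (m + 2) * ‖g y‖ := by ring
    _ ≤ (A * (1 + ‖y‖)) ^ (m + 2) * ‖g y‖ := by gcongr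
    _ = A ^ (m + 2) * ((1 + ‖y‖) ^ (m + 2) * ‖g y‖) := by rw [mul_pow, mul_assoc]
    _ ≤ A ^ (m + 2) * C := by gcongr

theorem exists_ball_one_add_abs_le_mul_norm_add_smul {p : E × E} (hp : p.2 ≠ 0) :
    ∃ ε > 0, ∃ A : ℝ, ∀ q ∈ ball p ε, ∀ t : ℝ, 1 + |t| ≤ A * (1 + ‖q.1 + t • q.2‖) := by
  obtain ⟨x, ξ⟩ := p
  set ε := ‖ξ‖ / 2 with hε_def
  have hε : 0 < ε := by have := norm_pos_iff.2 hp; positivity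
  set M := ‖x‖ + ε
  refine ⟨ε, hε, (1 + M) * (1 + ε⁻¹), fun ⟨y, η⟩ hq t => ?_⟩
  have hq' : ‖y - x‖ < ε ∧ ‖η - ξ‖ < ε := by
    simpa [mem_ball, dist_eq_norm, Prod.norm_def] using hq
  have hy : ‖y‖ ≤ M := by linarith [norm_le_norm_add_norm_sub' y x]
  have hη : ε ≤ ‖η‖ := by linarith [norm_le_norm_add_norm_sub' ξ η, norm_sub_rev ξ η]
  have ht : |t| ≤ (‖y + t • η‖ + M) * ε⁻¹ := by
    rw [← div_eq_mul_inv, le_div_iff₀ hε]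
    calc |t| * ε ≤ ‖t • η‖ := by rw [norm_smul, Real.norm_eq_abs]; gcongr
      _ ≤ ‖y + t • η‖ + ‖y‖ := by rw [add_comm y]; exact norm_le_add_norm_add _ _
      _ ≤ ‖y + t • η‖ + M := by gcongr
  set N := ‖y + t • η‖
  have hM : 0 ≤ M := by positivity
  have hN : 0 ≤ N := norm_nonneg _
  have hu : 0 ≤ ε⁻¹ := by positivity
  calc 1 + |t| ≤ 1 + (N + M) * ε⁻¹ := by gcongr
    _ ≤ (1 + M) * (1 + ε⁻¹) * (1 + N) := by
      nlinarith [mul_nonneg (mul_nonneg hM hu) hN, mul_nonneg hM hN, mul_nonneg hu hN]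

def addSMulCLM (t : ℝ) : E × E →L[ℝ] E :=
  ContinuousLinearMap.fst ℝ E E + t • ContinuousLinearMap.snd ℝ E E

theorem continuous_addSMulCLM : Continuous (addSMulCLM (E := E)) :=
  continuous_const.add (continuous_id.smul continuous_const)

theorem norm_addSMulCLM_le (t : ℝ) : ‖addSMulCLM (E := E) t‖ ≤ 1 + |t| := by
  refine ContinuousLinearMap.opNorm_le_bound _ (by positivity) fun q => ?_
  calc ‖q.1 + t • q.2‖ ≤ ‖q.1‖ + |t| * ‖q.2‖ := by
        rw [← Real.norm_eq_abs, ← norm_smul]; exact norm_add_le _ _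
    _ ≤ ‖q‖ + |t| * ‖q‖ := by gcongr; exacts [norm_fst_le q, norm_snd_le q]
    _ = (1 + |t|) * ‖q‖ := by ring

theorem hasFDerivAt_integral_pow_mul_comp_add_smul (k : ℕ) (f : SchwartzMap E ℝ) {p : E × E}
    (hp : p.2 ≠ 0) :
    Integrable (fun t : ℝ => t ^ k • (fderiv ℝ f (p.1 + t • p.2)).comp (addSMulCLM t)) ∧
    HasFDerivAt (fun q : E × E => ∫ t : ℝ, t ^ k * f (q.1 + t • q.2))
      (∫ t : ℝ, t ^ k • (fderiv ℝ f (p.1 + t • p.2)).comp (addSMulCLM t)) p := by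
  obtain ⟨ε, hε, A, hA⟩ := exists_ball_one_add_abs_le_mul_norm_add_smul hp
  obtain ⟨D₀, hD₀⟩ := f.exists_one_add_abs_pow_mul_norm_le k A
  obtain ⟨D₁, hD₁⟩ :=
    (SchwartzMap.fderivCLM ℝ E ℝ f).exists_one_add_abs_pow_mul_norm_le (k + 1) A
  set F' : E × E → ℝ → E × E →L[ℝ] ℝ :=
    fun q t => t ^ k • (fderiv ℝ f (q.1 + t • q.2)).comp (addSMulCLM t)
  have hF_cont : ∀ q : E × E, Continuous fun t : ℝ => t ^ k * f (q.1 + t • q.2) := by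
    intro q; fun_prop
  have hF'_cont : ∀ q, Continuous (F' q) := by
    intro q
    have hf' : Continuous (fderiv ℝ f) := (f.smooth ⊤).continuous_fderiv (by simp)
    exact (continuous_pow k).smul ((hf'.comp (by fun_prop)).clm_comp continuous_addSMulCLM)
  have hF_int : Integrable fun t : ℝ => t ^ k * f (p.1 + t • p.2) := by
    refine (integrable_inv_one_add_sq.const_mul D₀).mono' (hF_cont p).aestronglyMeasurable
      (ae_of_all _ fun t => ?_)
    calc ‖t ^ k * f (p.1 + t • p.2)‖ = |t| ^ k * ‖f (p.1 + t • p.2)‖ := by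
          rw [norm_mul, norm_pow, Real.norm_eq_abs]
      _ ≤ (1 + |t|) ^ k * ‖f (p.1 + t • p.2)‖ := by gcongr; linarith
      _ ≤ D₀ * (1 + t ^ 2)⁻¹ := hD₀ t _ (hA p (mem_ball_self hε) t)
  have hF'_bound : ∀ q ∈ ball p ε, ∀ t : ℝ, ‖F' q t‖ ≤ D₁ * (1 + t ^ 2)⁻¹ := by
    intro q hq t
    have hD := hD₁ t _ (hA q hq t)
    rw [SchwartzMap.fderivCLM_apply] at hD
    calc ‖F' q t‖ ≤ |t| ^ k * (‖fderiv ℝ f (q.1 + t • q.2)‖ * ‖addSMulCLM (E := E) t‖) := by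
          rw [norm_smul, norm_pow, Real.norm_eq_abs]
          gcongr
          exact ContinuousLinearMap.opNorm_comp_le _ _
      _ ≤ (1 + |t|) ^ k * (‖fderiv ℝ f (q.1 + t • q.2)‖ * (1 + |t|)) := by
          gcongr
          · linarith
          · exact norm_addSMulCLM_le t
      _ = (1 + |t|) ^ (k + 1) * ‖fderiv ℝ f (q.1 + t • q.2)‖ := by ring
      _ ≤ D₁ * (1 + t ^ 2)⁻¹ := hD
  have hF'_int : Integrable (F' p) :=
    (integrable_inv_one_add_sq.const_mul D₁).mono' (hF'_cont p).aestronglyMeasurable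
      (ae_of_all _ (hF'_bound p (mem_ball_self hε)))
  refine ⟨hF'_int, hasFDerivAt_integral_of_dominated_of_fderiv_le (ball_mem_nhds p hε)
    (Eventually.of_forall fun q => (hF_cont q).aestronglyMeasurable) hF_int
    (hF'_cont p).aestronglyMeasurable (ae_of_all _ fun t q hq => hF'_bound q hq t)
    (integrable_inv_one_add_sq.const_mul D₁) (ae_of_all _ fun t q _ => ?_)⟩
  exact ((f.differentiableAt.hasFDerivAt).comp q (addSMulCLM t).hasFDerivAt).const_mul (t ^ k)

theorem fderiv_integral_pow_mul_comp_add_smul_apply (k : ℕ) (f : SchwartzMap E ℝ)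
    {p : E × E} (hp : p.2 ≠ 0) (v w : E) :
    fderiv ℝ (fun q : E × E => ∫ t : ℝ, t ^ k * f (q.1 + t • q.2)) p (v, w) =
      ∫ t : ℝ, t ^ k * fderiv ℝ f (p.1 + t • p.2) (v + t • w) := by
  obtain ⟨hint, H⟩ := hasFDerivAt_integral_pow_mul_comp_add_smul k f hp
  rw [H.fderiv, ContinuousLinearMap.integral_apply hint]
  rfl

end MomentIntegral

theorem eventuallyEq_nhds_of_snd_ne_zero {X E β : Type*} [TopologicalSpace X]
    [TopologicalSpace E] [T1Space E] [Zero E] {g h : X × E → β}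
    (hgh : ∀ q : X × E, q.2 ≠ 0 → g q = h q) {p : X × E} (hp : p.2 ≠ 0) : g =ᶠ[𝓝 p] h :=
  Filter.mem_of_superset ((isOpen_compl_singleton.preimage continuous_snd).mem_nhds hp) hgh

section MomentRayTransform

variable {n : ℕ}

theorem pdx_jmom (k : ℕ) (f : SchwartzMap (Fin n → ℝ) ℝ) (j : Fin n)
    {p : (Fin n → ℝ) × (Fin n → ℝ)} (hp : p.2 ≠ 0) :
    pdx n j (Jmom n k f) p = Jmom n k (∂_{(Pi.single j 1 : Fin n → ℝ)} f) p := by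
  refine (fderiv_integral_pow_mul_comp_add_smul_apply k f hp _ _).trans ?_
  simp only [Jmom, SchwartzMap.lineDerivOp_apply_eq_fderiv, smul_zero, add_zero]

theorem pdxi_jmom (k : ℕ) (f : SchwartzMap (Fin n → ℝ) ℝ) (j : Fin n)
    {p : (Fin n → ℝ) × (Fin n → ℝ)} (hp : p.2 ≠ 0) :
    pdxi n j (Jmom n k f) p = Jmom n (k + 1) (∂_{(Pi.single j 1 : Fin n → ℝ)} f) p := by
  refine (fderiv_integral_pow_mul_comp_add_smul_apply k f hp _ _).trans ?_
  simp only [Jmom, SchwartzMap.lineDerivOp_apply_eq_fderiv, zero_add, map_smul, smul_eq_mul,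
    pow_succ, mul_assoc]

theorem mixedD_succ_succ (ℓ q : ℕ) (I : Fin (ℓ + 1) → Fin n)
    (ψ : (Fin n → ℝ) × (Fin n → ℝ) → ℝ) :
    mixedD n (ℓ + 1) (q + 1) I ψ = pdx n (I 0) (mixedD n ℓ q (Fin.tail I) ψ) := by
  simp only [mixedD, List.finRange_succ, List.foldr_cons, List.foldr_map, Fin.val_zero,
    Fin.val_succ, Nat.add_lt_add_iff_right, Nat.zero_lt_succ, if_true]
  rfl

theorem mixedD_succ_zero (ℓ : ℕ) (I : Fin (ℓ + 1) → Fin n)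
    (ψ : (Fin n → ℝ) × (Fin n → ℝ) → ℝ) :
    mixedD n (ℓ + 1) 0 I ψ = pdxi n (I 0) (mixedD n ℓ 0 (Fin.tail I) ψ) := by
  simp only [mixedD, List.finRange_succ, List.foldr_cons, List.foldr_map, Nat.not_lt_zero,
    if_false]
  rfl

theorem mixedD_self_jmom (k : ℕ) (f : SchwartzMap (Fin n → ℝ) ℝ) :
    ∀ (ℓ : ℕ) (I : Fin ℓ → Fin n) (p : (Fin n → ℝ) × (Fin n → ℝ)), p.2 ≠ 0 →
      mixedD n ℓ ℓ I (Jmom n k f) p =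
        Jmom n k (∂^{fun a => (Pi.single (I a) 1 : Fin n → ℝ)} f) p
  | 0, _, _, _ => rfl
  | ℓ + 1, I, p, hp => by
    have ih := eventuallyEq_nhds_of_snd_ne_zero (mixedD_self_jmom k f ℓ (Fin.tail I)) hp
    rw [mixedD_succ_succ, pdx, ih.fderiv_eq]
    exact pdx_jmom k _ (I 0) hp

theorem mixedD_zero_jmom (k : ℕ) (f : SchwartzMap (Fin n → ℝ) ℝ) :
    ∀ (ℓ : ℕ) (I : Fin ℓ → Fin n) (p : (Fin n → ℝ) × (Fin n → ℝ)), p.2 ≠ 0 →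
      mixedD n ℓ 0 I (Jmom n k f) p =
        Jmom n (k + ℓ) (∂^{fun a => (Pi.single (I a) 1 : Fin n → ℝ)} f) p
  | 0, _, _, _ => rfl
  | ℓ + 1, I, p, hp => by
    have ih := eventuallyEq_nhds_of_snd_ne_zero (mixedD_zero_jmom k f ℓ (Fin.tail I)) hp
    rw [mixedD_succ_zero, pdxi, ih.fderiv_eq]
    exact pdxi_jmom (k + ℓ) _ (I 0) hp

end MomentRayTransform

/-- Lemma 2.3: `∂^ℓ(J^k f)/∂x^{j₁}⋯∂x^{j_ℓ} = ∂^ℓ(J^{k−ℓ} f)/∂ξ^{j₁}⋯∂ξ^{j_ℓ}` for `ℓ ≤ k`. -/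
theorem stmt4 (n k ℓ : ℕ) (hℓ : ℓ ≤ k) (f : SchwartzMap (Fin n → ℝ) ℝ)
    (J : Fin ℓ → Fin n) :
    ∀ x ξ : Fin n → ℝ, ξ ≠ 0 →
      mixedD n ℓ ℓ J (Jmom n k f) (x, ξ) = mixedD n ℓ 0 J (Jmom n (k - ℓ) f) (x, ξ) := by
  intro x ξ hξ
  rw [mixedD_self_jmom k f ℓ J (x, ξ) hξ, mixedD_zero_jmom (k - ℓ) f ℓ J (x, ξ) hξ,
    Nat.sub_add_cancel hℓ]
end

section
/- For a Schwartz function f on ℝⁿ, the function (J^{m,0}f)(x,ξ) = ∫_{−∞}^{∞} t^m f(x+tξ) dt satisfies J_{ij}(J^{m,0}f) = 0 for all 1 ≤ i,j ≤ n, where J_{ij} = ∂²/∂x^i∂ξ^j − ∂²/∂x^j∂ξ^i is the John operator. -/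
open MeasureTheory

/-- `(J^{m,0} f)(x,ξ) = ∫ t^m f(x+tξ) dt`. -/
noncomputable def Jmom0 (n m : ℕ) (f : SchwartzMap (Fin n → ℝ) ℝ) :
    (Fin n → ℝ) × (Fin n → ℝ) → ℝ :=
  fun p => ∫ t : ℝ, t ^ m * f (p.1 + t • p.2)

/-
Differentiation under the integral sign is justified near any `(x, ξ)` with `ξ ≠ 0`: for `p` close
to `(x, ξ)` one has `1 + |t| ≤ K (1 + ‖p.1 + t • p.2‖)`, so the Schwartz decay of `f` and of its
derivative along the lines `t ↦ p.1 + t • p.2` gives a dominating function `C / (1 + t²)`.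
Differentiating yields `∂_{x^i} J^{m,0} f = J^{m,0} (∂_i f)` and `∂_{ξ^j} J^{m,0} f = J^{m+1,0} (∂_j f)`,
hence `∂_{x^i} ∂_{ξ^j} J^{m,0} f = J^{m+1,0} (∂_i ∂_j f)`, which is symmetric in `i, j` by Schwarz.
-/

open Metric LineDeriv SchwartzMap

namespace LineMoment

variable {E F : Type*} [NormedAddCommGroup E] [NormedSpace ℝ E]
  [NormedAddCommGroup F] [NormedSpace ℝ F]

noncomputable def lineEvalCLM (t : ℝ) : E × E →L[ℝ] E :=
  ContinuousLinearMap.fst ℝ E E + t • ContinuousLinearMap.snd ℝ E E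

lemma norm_lineEvalCLM_le (t : ℝ) : ‖(lineEvalCLM t : E × E →L[ℝ] E)‖ ≤ 1 + |t| := by
  refine ContinuousLinearMap.opNorm_le_bound _ (by positivity) fun p => ?_
  calc ‖p.1 + t • p.2‖ ≤ ‖p.1‖ + |t| * ‖p.2‖ := by
        simpa [norm_smul] using norm_add_le p.1 (t • p.2)
    _ ≤ ‖p‖ + |t| * ‖p‖ := by gcongr; exacts [norm_fst_le p, norm_snd_le p]
    _ = (1 + |t|) * ‖p‖ := by ring

lemma exists_one_add_abs_le_mul_one_add_norm {x ξ : E} (hξ : ξ ≠ 0) :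
    ∃ ε > 0, ∃ K, ∀ p ∈ ball (x, ξ) ε, ∀ t : ℝ, 1 + |t| ≤ K * (1 + ‖p.1 + t • p.2‖) := by
  set ε := ‖ξ‖ / 2 with hε_def
  have hε : 0 < ε := by positivity
  refine ⟨ε, hε, (‖x‖ + 2 * ε + 1) / ε, fun p hp t => ?_⟩
  rw [mem_ball, Prod.dist_eq, max_lt_iff, dist_eq_norm, dist_eq_norm] at hp
  obtain ⟨hp₁_near, hp₂_near⟩ := hp
  have hp₁ : ‖p.1‖ ≤ ‖x‖ + ε := by linarith [norm_le_norm_add_norm_sub' p.1 x, norm_sub_rev x p.1]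
  have hp₂ : ε ≤ ‖p.2‖ := by linarith [norm_le_norm_add_norm_sub' ξ p.2, norm_sub_rev ξ p.2]
  have ht : |t| * ε ≤ ‖p.1 + t • p.2‖ + ‖p.1‖ := by
    calc |t| * ε ≤ ‖t • p.2‖ := by rw [norm_smul, Real.norm_eq_abs]; gcongr
      _ ≤ ‖p.1 + t • p.2‖ + ‖p.1‖ := by simpa using norm_sub_le (p.1 + t • p.2) p.1
  rw [div_mul_eq_mul_div, le_div_iff₀ hε]
  nlinarith [norm_nonneg (p.1 + t • p.2), norm_nonneg x]

lemma _root_.SchwartzMap.exists_one_add_norm_pow_mul_le (h : 𝓢(E, F)) (k : ℕ) :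
    ∃ C, ∀ y, (1 + ‖y‖) ^ k * ‖h y‖ ≤ C :=
  ⟨_, fun y => by
    simpa [norm_iteratedFDeriv_zero] using
      SchwartzMap.one_add_le_sup_seminorm_apply (𝕜 := ℝ) (m := (k, 0)) le_rfl le_rfl h y⟩

lemma exists_pow_mul_norm_le_along_lines {x ξ : E} (hξ : ξ ≠ 0) (h : 𝓢(E, F)) (k : ℕ) :
    ∃ ε > 0, ∃ C, ∀ p ∈ ball (x, ξ) ε, ∀ t : ℝ,
      (1 + |t|) ^ k * ‖h (p.1 + t • p.2)‖ ≤ C * (1 + t ^ 2)⁻¹ := by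
  obtain ⟨ε, hε, K, hK⟩ := exists_one_add_abs_le_mul_one_add_norm (x := x) hξ
  obtain ⟨C, hC⟩ := h.exists_one_add_norm_pow_mul_le (k + 2)
  refine ⟨ε, hε, |K| ^ (k + 2) * C, fun p hp t => ?_⟩
  set y := p.1 + t • p.2
  rw [← div_eq_mul_inv, le_div_iff₀ (by positivity)]
  calc (1 + |t|) ^ k * ‖h y‖ * (1 + t ^ 2)
      ≤ (1 + |t|) ^ (k + 2) * ‖h y‖ := by
        rw [pow_add, mul_right_comm]
        gcongr
        nlinarith [sq_abs t, abs_nonneg t]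
    _ ≤ (|K| * (1 + ‖y‖)) ^ (k + 2) * ‖h y‖ := by
        gcongr
        exact (hK p hp t).trans (by gcongr; exact le_abs_self K)
    _ = |K| ^ (k + 2) * ((1 + ‖y‖) ^ (k + 2) * ‖h y‖) := by rw [mul_pow, mul_assoc]
    _ ≤ |K| ^ (k + 2) * C := by gcongr; exact hC y

variable (m : ℕ) (f : 𝓢(E, ℝ))

noncomputable def lineMoment (p : E × E) : ℝ := ∫ t : ℝ, t ^ m * f (p.1 + t • p.2)

noncomputable def lineMomentDerivIntegrand (p : E × E) (t : ℝ) : E × E →L[ℝ] ℝ :=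
  t ^ m • (fderiv ℝ f (p.1 + t • p.2)).comp (lineEvalCLM t)

lemma hasFDerivAt_lineMoment_integrand (t : ℝ) (p : E × E) :
    HasFDerivAt (fun q : E × E => t ^ m * f (q.1 + t • q.2))
      (lineMomentDerivIntegrand m f p t) p :=
  ((f.hasFDerivAt _).comp p (lineEvalCLM t).hasFDerivAt).const_mul (t ^ m)

lemma continuous_lineMomentDerivIntegrand (p : E × E) :
    Continuous (lineMomentDerivIntegrand m f p) := by
  have hline : Continuous fun t : ℝ => p.1 + t • p.2 := by fun_prop
  have hfderiv : Continuous (fderiv ℝ (f : E → ℝ)) := (f.smooth ⊤).continuous_fderiv (by simp)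
  have heval : Continuous fun t : ℝ => (lineEvalCLM t : E × E →L[ℝ] E) := by
    unfold lineEvalCLM; fun_prop
  exact (continuous_pow m).smul ((hfderiv.comp hline).clm_comp heval)

variable {m f}

lemma exists_norm_lineMoment_integrand_le {x ξ : E} (hξ : ξ ≠ 0) :
    ∃ C, ∀ t : ℝ, ‖t ^ m * f (x + t • ξ)‖ ≤ C * (1 + t ^ 2)⁻¹ := by
  obtain ⟨ε, hε, C, hC⟩ := exists_pow_mul_norm_le_along_lines (x := x) hξ f m
  refine ⟨C, fun t => le_trans ?_ (hC (x, ξ) (mem_ball_self hε) t)⟩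
  rw [norm_mul, norm_pow, Real.norm_eq_abs]
  gcongr
  linarith

lemma exists_norm_lineMomentDerivIntegrand_le {x ξ : E} (hξ : ξ ≠ 0) :
    ∃ ε > 0, ∃ C, ∀ p ∈ ball (x, ξ) ε, ∀ t : ℝ,
      ‖lineMomentDerivIntegrand m f p t‖ ≤ C * (1 + t ^ 2)⁻¹ := by
  obtain ⟨ε, hε, C, hC⟩ :=
    exists_pow_mul_norm_le_along_lines (x := x) hξ (fderivCLM ℝ E ℝ f) (m + 1)
  refine ⟨ε, hε, C, fun p hp t => le_trans ?_ (hC p hp t)⟩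
  rw [lineMomentDerivIntegrand, fderivCLM_apply, norm_smul, norm_pow, Real.norm_eq_abs, pow_succ,
    mul_assoc]
  gcongr
  · linarith
  · exact (ContinuousLinearMap.opNorm_comp_le _ _).trans
      (by rw [mul_comm]; gcongr; exact norm_lineEvalCLM_le t)

lemma integrable_lineMomentDerivIntegrand {x ξ : E} (hξ : ξ ≠ 0) :
    Integrable (lineMomentDerivIntegrand m f (x, ξ)) := by
  obtain ⟨ε, hε, C, hC⟩ := exists_norm_lineMomentDerivIntegrand_le (m := m) (f := f) (x := x) hξ
  exact (integrable_inv_one_add_sq.const_mul C).mono'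
    (continuous_lineMomentDerivIntegrand m f _).aestronglyMeasurable
    (.of_forall (hC _ (mem_ball_self hε)))

lemma hasFDerivAt_lineMoment {x ξ : E} (hξ : ξ ≠ 0) :
    HasFDerivAt (lineMoment m f) (∫ t, lineMomentDerivIntegrand m f (x, ξ) t) (x, ξ) := by
  obtain ⟨ε, hε, C, hC⟩ := exists_norm_lineMomentDerivIntegrand_le (m := m) (f := f) (x := x) hξ
  obtain ⟨C₀, hC₀⟩ := exists_norm_lineMoment_integrand_le (m := m) (f := f) (x := x) hξ
  have hcont (p : E × E) : Continuous fun t : ℝ => t ^ m * f (p.1 + t • p.2) := by fun_prop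
  exact hasFDerivAt_integral_of_dominated_of_fderiv_le (ball_mem_nhds _ hε)
    (.of_forall fun p => (hcont p).aestronglyMeasurable)
    ((integrable_inv_one_add_sq.const_mul C₀).mono' (hcont _).aestronglyMeasurable
      (.of_forall hC₀))
    (continuous_lineMomentDerivIntegrand m f _).aestronglyMeasurable
    (.of_forall fun t p hp => hC p hp t) (integrable_inv_one_add_sq.const_mul C)
    (.of_forall fun t p _ => hasFDerivAt_lineMoment_integrand m f t p)

lemma fderiv_lineMoment_apply {x ξ : E} (hξ : ξ ≠ 0) (w : E × E) :
    fderiv ℝ (lineMoment m f) (x, ξ) w = ∫ t, t ^ m * fderiv ℝ f (x + t • ξ) (w.1 + t • w.2) := by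
  rw [(hasFDerivAt_lineMoment hξ).fderiv,
    ContinuousLinearMap.integral_apply (integrable_lineMomentDerivIntegrand hξ)]
  rfl

lemma fderiv_lineMoment_apply_inl {x ξ : E} (hξ : ξ ≠ 0) (v : E) :
    fderiv ℝ (lineMoment m f) (x, ξ) (v, 0) = lineMoment m (∂_{v} f) (x, ξ) := by
  simp [fderiv_lineMoment_apply hξ, lineMoment, lineDerivOp_apply_eq_fderiv]

lemma fderiv_lineMoment_apply_inr {x ξ : E} (hξ : ξ ≠ 0) (v : E) :
    fderiv ℝ (lineMoment m f) (x, ξ) (0, v) = lineMoment (m + 1) (∂_{v} f) (x, ξ) := by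
  simp only [fderiv_lineMoment_apply hξ, lineMoment, lineDerivOp_apply_eq_fderiv, zero_add,
    map_smul, smul_eq_mul]
  congr 1 with t
  ring

lemma fderiv_fderiv_lineMoment_apply {x ξ : E} (hξ : ξ ≠ 0) (v w : E) :
    fderiv ℝ (fun p => fderiv ℝ (lineMoment m f) p (0, w)) (x, ξ) (v, 0) =
      lineMoment (m + 1) (∂_{v} (∂_{w} f)) (x, ξ) := by
  have hloc : (fun p => fderiv ℝ (lineMoment m f) p (0, w)) =ᶠ[nhds (x, ξ)]
      lineMoment (m + 1) (∂_{w} f) := by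
    filter_upwards [(isOpen_ne.preimage continuous_snd).mem_nhds hξ] with p hp
    exact fderiv_lineMoment_apply_inr hp w
  rw [hloc.fderiv_eq, fderiv_lineMoment_apply_inl hξ]

lemma _root_.SchwartzMap.lineDerivOp_comm (g : 𝓢(E, F)) (v w : E) :
    ∂_{v} (∂_{w} g) = ∂_{w} (∂_{v} g) := by
  ext y
  have hdiff : DifferentiableAt ℝ (fderiv ℝ (g : E → F)) y :=
    ((g.smooth 2).fderiv_right (m := 1) (by norm_num)).differentiable one_ne_zero y
  have hsecond (a b : E) : ∂_{a} (∂_{b} g) y = fderiv ℝ (fderiv ℝ g) y a b := by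
    have h := ((ContinuousLinearMap.apply ℝ F b).hasFDerivAt.comp y hdiff.hasFDerivAt).fderiv
    rw [lineDerivOp_apply_eq_fderiv]
    exact congrArg (· a) h
  rw [hsecond, hsecond]
  exact (g.smooth 2).contDiffAt.isSymmSndFDerivAt (by simp) v w

end LineMoment

/-- The John operator annihilates `J^{m,0} f` for Schwartz `f`. -/
theorem stmt5 (n m : ℕ) (f : SchwartzMap (Fin n → ℝ) ℝ) :
    ∀ i j : Fin n, ∀ x ξ : Fin n → ℝ, ξ ≠ 0 →
      john n i j (Jmom0 n m f) (x, ξ) = 0 := by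
  intro i j x ξ hξ
  change fderiv ℝ (fun p => fderiv ℝ (LineMoment.lineMoment m f) p (0, Pi.single j 1)) (x, ξ)
      (Pi.single i 1, 0) -
    fderiv ℝ (fun p => fderiv ℝ (LineMoment.lineMoment m f) p (0, Pi.single i 1)) (x, ξ)
      (Pi.single j 1, 0) = 0
  rw [LineMoment.fderiv_fderiv_lineMoment_apply hξ, LineMoment.fderiv_fderiv_lineMoment_apply hξ,
    SchwartzMap.lineDerivOp_comm, sub_self]
end

section
/- Let f = (f_{i₁…i_k}) be a rank k symmetric Schwartz tensor field on ℝⁿ and define (J^{m,k}f)(x,ξ) = ∫_{−∞}^{∞} t^m f_{i₁…i_k}(x+tξ) ξ^{i₁}⋯ξ^{i_k} dt. Then for any k+1 John operators, J_{i₁j₁}⋯J_{i_{k+1}j_{k+1}}(J^{m,k}f) = 0 for all indices 1 ≤ i₁,j₁,…,i_{k+1},j_{k+1} ≤ n. -/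
open MeasureTheory

/-- `(J^{m,k} f)(x,ξ) = ∫ t^m ⟨f(x+tξ), ξ^k⟩ dt` for a rank-`k` tensor field `f`
given by its component functions. -/
noncomputable def JmomT (n m k : ℕ) (f : (Fin k → Fin n) → (Fin n → ℝ) → ℝ) :
    (Fin n → ℝ) × (Fin n → ℝ) → ℝ :=
  fun p => ∫ t : ℝ, t ^ m *
    ∑ I : Fin k → Fin n, f I (p.1 + t • p.2) * ∏ a : Fin k, p.2 (I a)

open Metric Set Finset LineDeriv
open scoped SchwartzMap

section LineMoment

variable {E F : Type*} [NormedAddCommGroup E] [NormedSpace ℝ E]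
  [NormedAddCommGroup F] [NormedSpace ℝ F]

noncomputable def lineMoment (m : ℕ) (φ : 𝓢(E, ℝ)) (p : E × E) : ℝ :=
  ∫ t : ℝ, t ^ m * φ (p.1 + t • p.2)

noncomputable def lineEvalCLM (t : ℝ) : E × E →L[ℝ] E :=
  ContinuousLinearMap.fst ℝ E E + t • ContinuousLinearMap.snd ℝ E E

lemma lineEvalCLM_apply (t : ℝ) (q : E × E) : lineEvalCLM t q = q.1 + t • q.2 := rfl

lemma norm_lineEvalCLM_le (t : ℝ) : ‖(lineEvalCLM t : E × E →L[ℝ] E)‖ ≤ 1 + |t| := by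
  refine (norm_add_le _ _).trans (add_le_add (ContinuousLinearMap.norm_fst_le ℝ E E) ?_)
  rw [norm_smul, Real.norm_eq_abs]
  exact mul_le_of_le_one_right (abs_nonneg t) (ContinuousLinearMap.norm_snd_le ℝ E E)

lemma exists_pos_mul_one_add_abs_le {p : E × E} (hp : p.2 ≠ 0) :
    ∃ c > 0, ∀ q ∈ ball p (‖p.2‖ / 2), ∀ t : ℝ, c * (1 + |t|) ≤ 1 + ‖q.1 + t • q.2‖ := by
  set δ := ‖p.2‖ / 2 with hδ_def
  have hδ : 0 < δ := by have := norm_pos_iff.mpr hp; positivity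
  set R := ‖p.1‖ + δ
  refine ⟨δ / (1 + R + δ), by positivity, fun q hq t => ?_⟩
  have hq₁ : dist q.1 p.1 < δ := (le_max_left _ _).trans_lt (mem_ball.mp hq)
  have hq₂ : dist q.2 p.2 < δ := (le_max_right _ _).trans_lt (mem_ball.mp hq)
  have hR : ‖q.1‖ ≤ R := by
    have := norm_le_norm_add_norm_sub' q.1 p.1; rw [← dist_eq_norm] at this; linarith
  have hδq : δ ≤ ‖q.2‖ := by
    have := norm_le_norm_add_norm_sub' p.2 q.2
    rw [← dist_eq_norm, dist_comm] at this
    linarith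
  have hline : δ * |t| ≤ ‖q.1 + t • q.2‖ + R := by
    calc δ * |t| ≤ ‖t • q.2‖ := by
          rw [norm_smul, Real.norm_eq_abs, mul_comm]; gcongr
      _ = ‖(q.1 + t • q.2) - q.1‖ := by rw [add_sub_cancel_left]
      _ ≤ ‖q.1 + t • q.2‖ + R := (norm_sub_le _ _).trans (by gcongr)
  rw [div_mul_eq_mul_div, div_le_iff₀ (by positivity)]
  nlinarith [norm_nonneg (q.1 + t • q.2), norm_nonneg q.1]

lemma SchwartzMap.exists_one_add_norm_pow_mul_le_s6 (φ : 𝓢(E, F)) (k : ℕ) :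
    ∃ M, ∀ y, (1 + ‖y‖) ^ k * ‖φ y‖ ≤ M :=
  ⟨_, fun y => by
    simpa only [norm_iteratedFDeriv_zero] using
      SchwartzMap.one_add_le_sup_seminorm_apply (𝕜 := ℝ) (m := (k, 0)) le_rfl le_rfl φ y⟩

lemma SchwartzMap.exists_bound_along_lines (ψ : 𝓢(E, F)) (m : ℕ) {p : E × E} (hp : p.2 ≠ 0) :
    ∃ C, ∀ q ∈ ball p (‖p.2‖ / 2), ∀ t : ℝ,
      |t| ^ m * (1 + |t|) * ‖ψ (q.1 + t • q.2)‖ ≤ C * (1 + t ^ 2)⁻¹ := by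
  obtain ⟨c, hc, hline⟩ := exists_pos_mul_one_add_abs_le hp
  obtain ⟨M, hM⟩ := ψ.exists_one_add_norm_pow_mul_le_s6 (m + 3)
  have hM₀ : 0 ≤ M := le_trans (by positivity) (hM 0)
  refine ⟨M / c ^ (m + 3), fun q hq t => ?_⟩
  set s := 1 + |t|
  set y := q.1 + t • q.2
  have hs : 1 ≤ s := le_add_of_nonneg_right (abs_nonneg t)
  have hdecay : s ^ (m + 3) * ‖ψ y‖ ≤ M / c ^ (m + 3) := by
    rw [le_div_iff₀ (by positivity)]
    calc s ^ (m + 3) * ‖ψ y‖ * c ^ (m + 3) = (c * s) ^ (m + 3) * ‖ψ y‖ := by rw [mul_pow]; ring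
      _ ≤ (1 + ‖y‖) ^ (m + 3) * ‖ψ y‖ := by gcongr; exact hline q hq t
      _ ≤ M := hM y
  have hsq : 1 + t ^ 2 ≤ s ^ 2 := by nlinarith [sq_abs t, abs_nonneg t]
  calc |t| ^ m * s * ‖ψ y‖ ≤ s ^ m * s * ‖ψ y‖ := by gcongr; linarith
    _ = s ^ (m + 3) * ‖ψ y‖ * (s ^ 2)⁻¹ := by field_simp; ring
    _ ≤ M / c ^ (m + 3) * (1 + t ^ 2)⁻¹ := by gcongr

lemma integrable_pow_mul_comp_line (m : ℕ) (φ : 𝓢(E, ℝ)) {q : E × E} (hq : q.2 ≠ 0) :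
    Integrable fun t : ℝ => t ^ m * φ (q.1 + t • q.2) := by
  obtain ⟨C, hC⟩ := φ.exists_bound_along_lines m hq
  refine (integrable_inv_one_add_sq.const_mul C).mono' (by fun_prop) (.of_forall fun t => ?_)
  refine le_trans ?_ (hC q (mem_ball_self (by have := norm_pos_iff.mpr hq; positivity)) t)
  rw [norm_mul, norm_pow, Real.norm_eq_abs, mul_right_comm]
  exact le_mul_of_one_le_right (by positivity) (le_add_of_nonneg_right (abs_nonneg t))

lemma norm_pow_smul_fderiv_comp_le (φ : 𝓢(E, ℝ)) (m : ℕ) (q : E × E) (t : ℝ) :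
    ‖t ^ m • (fderiv ℝ φ (q.1 + t • q.2)).comp (lineEvalCLM t)‖ ≤
      |t| ^ m * (1 + |t|) * ‖SchwartzMap.fderivCLM ℝ E ℝ φ (q.1 + t • q.2)‖ := by
  rw [norm_smul, norm_pow, Real.norm_eq_abs, SchwartzMap.fderivCLM_apply, mul_assoc]
  gcongr
  calc _ ≤ ‖fderiv ℝ φ (q.1 + t • q.2)‖ * ‖(lineEvalCLM t : E × E →L[ℝ] E)‖ :=
        ContinuousLinearMap.opNorm_comp_le _ _
    _ ≤ _ := by rw [mul_comm]; gcongr; exact norm_lineEvalCLM_le t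

lemma continuous_pow_smul_fderiv_comp (φ : 𝓢(E, ℝ)) (m : ℕ) (q : E × E) :
    Continuous fun t : ℝ => t ^ m • (fderiv ℝ φ (q.1 + t • q.2)).comp (lineEvalCLM t) := by
  have hL : Continuous fun t : ℝ => (lineEvalCLM t : E × E →L[ℝ] E) :=
    continuous_const.add (continuous_id.smul continuous_const)
  exact (continuous_pow m).smul
    (((SchwartzMap.fderivCLM ℝ E ℝ φ).continuous.comp (by fun_prop)).clm_comp hL)

lemma hasFDerivAt_lineMoment (m : ℕ) (φ : 𝓢(E, ℝ)) {p : E × E} (hp : p.2 ≠ 0) :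
    HasFDerivAt (lineMoment m φ)
      (∫ t : ℝ, t ^ m • (fderiv ℝ φ (p.1 + t • p.2)).comp (lineEvalCLM t)) p := by
  obtain ⟨C, hC⟩ := (SchwartzMap.fderivCLM ℝ E ℝ φ).exists_bound_along_lines m hp
  refine hasFDerivAt_integral_of_dominated_of_fderiv_le
    (ball_mem_nhds p (by have := norm_pos_iff.mpr hp; positivity))
    (.of_forall fun q => by fun_prop)
    (integrable_pow_mul_comp_line m φ hp)
    (continuous_pow_smul_fderiv_comp φ m p).aestronglyMeasurable
    (.of_forall fun t q hq => (norm_pow_smul_fderiv_comp_le φ m q t).trans (hC q hq t))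
    (integrable_inv_one_add_sq.const_mul C)
    (.of_forall fun t q _ => ?_)
  exact ((φ.hasFDerivAt _).comp q (lineEvalCLM t).hasFDerivAt).const_mul (t ^ m)

lemma fderiv_lineMoment_apply (m : ℕ) (φ : 𝓢(E, ℝ)) {p : E × E} (hp : p.2 ≠ 0) (v w : E) :
    fderiv ℝ (lineMoment m φ) p (v, w) =
      lineMoment m (∂_{v} φ) p + lineMoment (m + 1) (∂_{w} φ) p := by
  obtain ⟨C, hC⟩ := (SchwartzMap.fderivCLM ℝ E ℝ φ).exists_bound_along_lines m hp
  have hint : Integrable fun t : ℝ => t ^ m • (fderiv ℝ φ (p.1 + t • p.2)).comp (lineEvalCLM t) :=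
    (integrable_inv_one_add_sq.const_mul C).mono'
      (continuous_pow_smul_fderiv_comp φ m p).aestronglyMeasurable
      (.of_forall fun t => (norm_pow_smul_fderiv_comp_le φ m p t).trans
        (hC p (mem_ball_self (by have := norm_pos_iff.mpr hp; positivity)) t))
  rw [(hasFDerivAt_lineMoment m φ hp).fderiv, ContinuousLinearMap.integral_apply hint,
    lineMoment, lineMoment, ← integral_add (integrable_pow_mul_comp_line m _ hp)
      (integrable_pow_mul_comp_line (m + 1) _ hp)]
  congr 1 with t
  simp only [smul_apply, ContinuousLinearMap.comp_apply, lineEvalCLM_apply,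
    map_add, map_smul, SchwartzMap.lineDerivOp_apply_eq_fderiv, smul_eq_mul]
  ring

lemma lineMoment_smul (m : ℕ) (a : ℝ) (φ : 𝓢(E, ℝ)) (p : E × E) :
    lineMoment m (a • φ) p = a * lineMoment m φ p := by
  rw [lineMoment, lineMoment, ← integral_const_mul]
  congr 1 with t
  rw [smul_apply, smul_eq_mul]
  ring

lemma lineMoment_sub (m : ℕ) (φ ψ : 𝓢(E, ℝ)) {p : E × E} (hp : p.2 ≠ 0) :
    lineMoment m (φ - ψ) p = lineMoment m φ p - lineMoment m ψ p := by
  rw [lineMoment, lineMoment, lineMoment, ← integral_sub (integrable_pow_mul_comp_line m φ hp)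
    (integrable_pow_mul_comp_line m ψ hp)]
  congr 1 with t
  rw [sub_apply]
  ring

end LineMoment

lemma SchwartzMap.lineDerivOp_comm_s6 {E F : Type*} [NormedAddCommGroup E] [NormedSpace ℝ E]
    [NormedAddCommGroup F] [NormedSpace ℝ F] (φ : 𝓢(E, F)) (v w : E) :
    ∂_{v} (∂_{w} φ) = ∂_{w} (∂_{v} φ) := by
  ext x
  have hφ' : Differentiable ℝ (fderiv ℝ φ) := (SchwartzMap.fderivCLM ℝ E F φ).differentiable
  have hsnd : ∀ u u' : E, ∂_{u} (∂_{u'} φ) x = fderiv ℝ (fderiv ℝ φ) x u u' := fun u u' => by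
    rw [SchwartzMap.lineDerivOp_apply_eq_fderiv,
      show ⇑(∂_{u'} φ : 𝓢(E, F)) = fun y => fderiv ℝ φ y u' from
        funext (lineDerivOp_apply_eq_fderiv u' φ),
      fderiv_clm_apply hφ'.differentiableAt (differentiableAt_const u')]
    simp
  rw [hsnd, hsnd, (φ.smooth 2).contDiffAt.isSymmSndFDerivAt (by simp)]

section MomentSum

variable {E : Type*} [NormedAddCommGroup E] [NormedSpace ℝ E] {ι : Type*} [Fintype ι]

/-- `J^{m,k} f` has monomial weights `ξ ↦ ξ^I`; general weights make the shape closed under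
`∂/∂ξ`, which differentiates them. -/
noncomputable def momentSum (m : ℕ) (c : ι → E → ℝ) (φ : ι → 𝓢(E, ℝ)) (q : E × E) : ℝ :=
  ∑ i, c i q.2 * lineMoment m (φ i) q

variable {m : ℕ} {c : ι → E → ℝ} {φ : ι → 𝓢(E, ℝ)} {p : E × E}

lemma hasFDerivAt_momentSum (hc : ∀ i, Differentiable ℝ (c i)) (hp : p.2 ≠ 0) :
    HasFDerivAt (momentSum m c φ) (∑ i, (c i p.2 • fderiv ℝ (lineMoment m (φ i)) p +
      lineMoment m (φ i) p • (fderiv ℝ (c i) p.2).comp (ContinuousLinearMap.snd ℝ E E))) p :=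
  HasFDerivAt.fun_sum fun i _ =>
    ((hc i p.2).hasFDerivAt.comp p hasFDerivAt_snd).mul
      (hasFDerivAt_lineMoment m (φ i) hp).differentiableAt.hasFDerivAt

lemma fderiv_momentSum_apply (hc : ∀ i, Differentiable ℝ (c i)) (hp : p.2 ≠ 0) (v w : E) :
    fderiv ℝ (momentSum m c φ) p (v, w) =
      momentSum m (fun i ξ => fderiv ℝ (c i) ξ w) φ p +
        momentSum m c (fun i => ∂_{v} (φ i)) p + momentSum (m + 1) c (fun i => ∂_{w} (φ i)) p := by
  simp only [(hasFDerivAt_momentSum hc hp).fderiv, momentSum, ← Finset.sum_add_distrib,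
    _root_.sum_apply]
  refine Finset.sum_congr rfl fun i _ => ?_
  simp only [add_apply, smul_apply,
    ContinuousLinearMap.comp_apply, ContinuousLinearMap.coe_snd', smul_eq_mul,
    fderiv_lineMoment_apply m (φ i) hp]
  ring

end MomentSum

lemma Set.EqOn.fderiv {𝕜 X Y : Type*} [NontriviallyNormedField 𝕜] [NormedAddCommGroup X]
    [NormedSpace 𝕜 X] [NormedAddCommGroup Y] [NormedSpace 𝕜 Y] {f g : X → Y} {U : Set X}
    (hU : IsOpen U) (h : EqOn f g U) : EqOn (fderiv 𝕜 f) (fderiv 𝕜 g) U :=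
  fun _ hq => (h.eventuallyEq_of_mem (hU.mem_nhds hq)).fderiv_eq

lemma isOpen_setOf_snd_ne_zero {X E : Type*} [TopologicalSpace X] [TopologicalSpace E]
    [T2Space E] [Zero E] : IsOpen {q : X × E | q.2 ≠ 0} :=
  isOpen_ne_fun continuous_snd continuous_const

section John

variable {n : ℕ} {U : Set ((Fin n → ℝ) × (Fin n → ℝ))} {ψ₁ ψ₂ : (Fin n → ℝ) × (Fin n → ℝ) → ℝ}

lemma Set.EqOn.john (hU : IsOpen U) (h : EqOn ψ₁ ψ₂ U) (i j : Fin n) :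
    EqOn (john n i j ψ₁) (john n i j ψ₂) U := fun q hq => by
  have hxi : ∀ k, EqOn (pdxi n k ψ₁) (pdxi n k ψ₂) U := fun k q hq => by
    simp only [pdxi, h.fderiv hU hq]
  simp only [_root_.john, pdx, (hxi j).fderiv hU hq, (hxi i).fderiv hU hq]

lemma iterJohn_succ (r : ℕ) (I J : Fin (r + 1) → Fin n) (ψ : (Fin n → ℝ) × (Fin n → ℝ) → ℝ) :
    iterJohn n (r + 1) I J ψ =
      iterJohn n r (Fin.init I) (Fin.init J) (john n (I (Fin.last r)) (J (Fin.last r)) ψ) := by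
  rw [iterJohn, iterJohn, List.finRange_succ_last, List.foldr_append, List.foldr_map]
  rfl

lemma Set.EqOn.iterJohn (hU : IsOpen U) (h : EqOn ψ₁ ψ₂ U) (r : ℕ) (I J : Fin r → Fin n) :
    EqOn (iterJohn n r I J ψ₁) (iterJohn n r I J ψ₂) U := by
  induction r generalizing ψ₁ ψ₂ with
  | zero => exact h
  | succ r ih =>
    rw [iterJohn_succ, iterJohn_succ]
    exact ih (h.john hU _ _) _ _

lemma iterJohn_zero (r : ℕ) (I J : Fin r → Fin n) : iterJohn n r I J 0 = 0 := by
  induction r with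
  | zero => rfl
  | succ r ih =>
    have hpdxi : ∀ k, pdxi n k 0 = 0 := fun k => by ext; simp [pdxi]
    rw [iterJohn_succ, show john n (I (Fin.last r)) (J (Fin.last r)) 0 = 0 by
      ext; simp [john, pdx, hpdxi]]
    exact ih _ _

end John

section JohnMomentSum

open Filter Topology

variable {n : ℕ} {ι : Type*} [Fintype ι] {m : ℕ} {c : ι → (Fin n → ℝ) → ℝ}
  {φ : ι → 𝓢(Fin n → ℝ, ℝ)} {p : (Fin n → ℝ) × (Fin n → ℝ)}

lemma pdx_momentSum (hc : ∀ I, Differentiable ℝ (c I)) (hp : p.2 ≠ 0) (i : Fin n) :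
    pdx n i (momentSum m c φ) p =
      momentSum m c (fun I => ∂_{(Pi.single i 1 : Fin n → ℝ)} (φ I)) p := by
  simp [pdx, fderiv_momentSum_apply hc hp, momentSum, lineMoment]

lemma pdxi_momentSum (hc : ∀ I, Differentiable ℝ (c I)) (hp : p.2 ≠ 0) (j : Fin n) :
    pdxi n j (momentSum m c φ) p =
      momentSum m (fun I ξ => fderiv ℝ (c I) ξ (Pi.single j 1)) φ p +
        momentSum (m + 1) c (fun I => ∂_{(Pi.single j 1 : Fin n → ℝ)} (φ I)) p := by
  have : momentSum m c (fun I => ∂_{(0 : Fin n → ℝ)} (φ I)) p = 0 := by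
    simp [momentSum, lineMoment]
  rw [pdxi, fderiv_momentSum_apply hc hp, this, add_zero]

lemma john_momentSum (hc : ∀ I, ContDiff ℝ 2 (c I)) (hp : p.2 ≠ 0) (i j : Fin n) :
    john n i j (momentSum m c φ) p =
      momentSum m (fun I ξ => fderiv ℝ (c I) ξ (Pi.single j 1))
          (fun I => ∂_{(Pi.single i 1 : Fin n → ℝ)} (φ I)) p -
        momentSum m (fun I ξ => fderiv ℝ (c I) ξ (Pi.single i 1))
          (fun I => ∂_{(Pi.single j 1 : Fin n → ℝ)} (φ I)) p := by
  have hc₁ : ∀ I, Differentiable ℝ (c I) := fun I => (hc I).differentiable (by norm_num)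
  have hc₂ : ∀ (v : Fin n → ℝ) I, Differentiable ℝ fun ξ => fderiv ℝ (c I) ξ v := fun v I =>
    (((hc I).fderiv_right (m := 1) (by norm_num)).clm_apply contDiff_const).differentiable
      (by norm_num)
  have hmixed : ∀ i j, pdx n i (pdxi n j (momentSum m c φ)) p =
      momentSum m (fun I ξ => fderiv ℝ (c I) ξ (Pi.single j 1))
          (fun I => ∂_{(Pi.single i 1 : Fin n → ℝ)} (φ I)) p +
        momentSum (m + 1) c
          (fun I => ∂_{(Pi.single i 1 : Fin n → ℝ)} (∂_{(Pi.single j 1 : Fin n → ℝ)} (φ I))) p := by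
    intro i j
    have hpdxi : pdxi n j (momentSum m c φ) =ᶠ[𝓝 p]
        momentSum m (fun I ξ => fderiv ℝ (c I) ξ (Pi.single j 1)) φ +
          momentSum (m + 1) c (fun I => ∂_{(Pi.single j 1 : Fin n → ℝ)} (φ I)) :=
      eventually_of_mem (isOpen_setOf_snd_ne_zero.mem_nhds hp) fun q hq =>
        pdxi_momentSum hc₁ hq j
    rw [pdx, hpdxi.fderiv_eq, fderiv_add (hasFDerivAt_momentSum (hc₂ _) hp).differentiableAt
      (hasFDerivAt_momentSum hc₁ hp).differentiableAt, add_apply]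
    exact congrArg₂ (· + ·) (pdx_momentSum (hc₂ _) hp i) (pdx_momentSum hc₁ hp i)
  simp only [john, hmixed, SchwartzMap.lineDerivOp_comm_s6 _ (Pi.single i 1)]
  ring

end JohnMomentSum

lemma Fin.prod_univ_erase {M : Type*} [CommMonoid M] {k : ℕ} (f : Fin (k + 1) → M)
    (a : Fin (k + 1)) : ∏ b ∈ univ.erase a, f b = ∏ c, f (a.succAbove c) := by
  rw [show univ.erase a = univ.map a.succAboveEmb by
    ext b; simp [Fin.exists_succAbove_eq_iff], prod_map]
  rfl

section Monomial

variable {n k : ℕ}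

lemma contDiff_prod_apply (I : Fin k → Fin n) :
    ContDiff ℝ 2 fun ξ : Fin n → ℝ => ∏ a, ξ (I a) :=
  contDiff_prod fun a _ => contDiff_apply ℝ ℝ (I a)

lemma fderiv_prod_apply_single (I : Fin k → Fin n) (ξ : Fin n → ℝ) (j : Fin n) :
    fderiv ℝ (fun ξ : Fin n → ℝ => ∏ a, ξ (I a)) ξ (Pi.single j 1) =
      ∑ a, if I a = j then ∏ b ∈ univ.erase a, ξ (I b) else 0 := by
  rw [(HasFDerivAt.finsetProd fun a _ => hasFDerivAt_apply (I a) ξ).fderiv]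
  simp [Pi.single_apply]

/-- Differentiating `ξ^I` in `ξ_j` removes one index in each of the `k + 1` positions; against a
symmetric weight all positions contribute alike. -/
lemma sum_fderiv_prod_mul_of_comp_perm (W : (Fin (k + 1) → Fin n) → ℝ)
    (hW : ∀ I (π : Equiv.Perm (Fin (k + 1))), W (I ∘ π) = W I) (ξ : Fin n → ℝ) (j : Fin n) :
    ∑ I, fderiv ℝ (fun ξ : Fin n → ℝ => ∏ a, ξ (I a)) ξ (Pi.single j 1) * W I =
      (k + 1) * ∑ I', (∏ c, ξ (I' c)) * W (Fin.cons j I') := by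
  have hslot : ∀ a : Fin (k + 1),
      ∑ I : Fin (k + 1) → Fin n, (if I a = j then (∏ b ∈ univ.erase a, ξ (I b)) * W I else 0) =
        ∑ I', (∏ c, ξ (I' c)) * W (Fin.cons j I') := by
    intro a
    rw [← (Fin.insertNthEquiv (fun _ => Fin n) a).sum_comp, Fintype.sum_prod_type]
    simp only [Fin.insertNthEquiv_apply, Fin.insertNth_apply_same, Fin.prod_univ_erase,
      Fin.insertNth_apply_succAbove]
    rw [Finset.sum_eq_single_of_mem j (mem_univ j) fun v _ hv => by simp [hv]]
    refine Finset.sum_congr rfl fun I' _ => ?_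
    rw [if_pos rfl, ← Fin.insertNth_comp_cycleRange_symm, hW]
    rfl
  simp only [fderiv_prod_apply_single, Finset.sum_mul, ite_mul, zero_mul]
  rw [Finset.sum_comm, Finset.sum_congr rfl fun a _ => hslot a, Finset.sum_const, card_univ,
    Fintype.card_fin, nsmul_eq_mul]
  push_cast
  ring

end Monomial

section JohnJmomT

variable {n m k : ℕ}

lemma JmomT_eqOn_momentSum (g : (Fin k → Fin n) → 𝓢(Fin n → ℝ, ℝ)) :
    EqOn (JmomT n m k fun I => g I) (momentSum m (fun I ξ => ∏ a, ξ (I a)) g)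
      {q | q.2 ≠ 0} := by
  intro p hp
  simp only [JmomT, momentSum, lineMoment, ← integral_const_mul]
  rw [← integral_finsetSum _ fun I _ => (integrable_pow_mul_comp_line m (g I) hp).const_mul _]
  congr 1 with t
  rw [mul_sum]
  exact sum_congr rfl fun I _ => by ring

lemma john_JmomT_zero (g : (Fin 0 → Fin n) → 𝓢(Fin n → ℝ, ℝ)) (i j : Fin n) :
    EqOn (john n i j (JmomT n m 0 fun I => g I)) 0 {q | q.2 ≠ 0} := by
  intro p hp
  rw [(JmomT_eqOn_momentSum g).john isOpen_setOf_snd_ne_zero i j hp,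
    john_momentSum (fun I => contDiff_prod_apply I) hp]
  simp [momentSum]

lemma john_JmomT_succ (g : (Fin (k + 1) → Fin n) → 𝓢(Fin n → ℝ, ℝ))
    (hg : ∀ I (π : Equiv.Perm (Fin (k + 1))), g (I ∘ π) = g I) (i j : Fin n) :
    EqOn (john n i j (JmomT n m (k + 1) fun I => g I))
      (JmomT n m k fun I' => ⇑(((k : ℝ) + 1) •
        (∂_{(Pi.single i 1 : Fin n → ℝ)} (g (Fin.cons j I')) -
          ∂_{(Pi.single j 1 : Fin n → ℝ)} (g (Fin.cons i I')))))
      {q | q.2 ≠ 0} := by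
  intro p hp
  rw [(JmomT_eqOn_momentSum g).john isOpen_setOf_snd_ne_zero i j hp,
    john_momentSum (fun I => contDiff_prod_apply I) hp, JmomT_eqOn_momentSum _ hp]
  simp only [momentSum]
  rw [sum_fderiv_prod_mul_of_comp_perm _ (fun I π => by simp only [hg]) p.2 j,
    sum_fderiv_prod_mul_of_comp_perm _ (fun I π => by simp only [hg]) p.2 i]
  simp only [lineMoment_smul, lineMoment_sub _ _ _ hp, mul_sum, ← sum_sub_distrib]
  exact sum_congr rfl fun I' _ => by ring

end JohnJmomT

lemma Fin.cons_comp_perm {α : Type*} {k : ℕ} (v : α) (I : Fin k → α) (π : Equiv.Perm (Fin k)) :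
    Fin.cons v (I ∘ π) = Fin.cons v I ∘ Equiv.Perm.decomposeFin.symm (0, π) := by
  funext b
  cases b using Fin.cases <;>
    simp [Equiv.Perm.decomposeFin_symm_apply_zero, Equiv.Perm.decomposeFin_symm_apply_succ]

lemma iterJohn_JmomT_eqOn_zero {n : ℕ} (m k r : ℕ) (hkr : k < r)
    (g : (Fin k → Fin n) → 𝓢(Fin n → ℝ, ℝ)) (hg : ∀ I (π : Equiv.Perm (Fin k)), g (I ∘ π) = g I)
    (I J : Fin r → Fin n) :
    EqOn (iterJohn n r I J (JmomT n m k fun I => g I)) 0 {q | q.2 ≠ 0} := by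
  induction k generalizing r with
  | zero =>
    obtain ⟨r, rfl⟩ : ∃ r', r = r' + 1 := Nat.exists_eq_add_one.mpr hkr
    rw [iterJohn_succ, ← iterJohn_zero r (Fin.init I) (Fin.init J)]
    exact (john_JmomT_zero g _ _).iterJohn isOpen_setOf_snd_ne_zero _ _ _
  | succ k ih =>
    obtain ⟨r, rfl⟩ : ∃ r', r = r' + 1 := Nat.exists_eq_add_one.mpr (by omega)
    rw [iterJohn_succ]
    refine ((john_JmomT_succ g hg _ _).iterJohn isOpen_setOf_snd_ne_zero _ _ _).trans
      (ih r (by omega) _ (fun I' π => ?_) _ _)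
    simp only [Fin.cons_comp_perm, hg]

/-- Lemma 2.4: any `k+1` John operators annihilate `J^{m,k} f` for a rank-`k`
symmetric Schwartz tensor field `f`. -/
theorem stmt6 (n m k : ℕ) (f : (Fin k → Fin n) → SchwartzMap (Fin n → ℝ) ℝ)
    (hsym : ∀ (I : Fin k → Fin n) (π : Equiv.Perm (Fin k)), f (I ∘ π) = f I) :
    ∀ (I J : Fin (k + 1) → Fin n) (x ξ : Fin n → ℝ), ξ ≠ 0 →
      iterJohn n (k + 1) I J (JmomT n m k (fun a => ⇑(f a))) (x, ξ) = 0 := by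
  intro I J x ξ hξ
  exact iterJohn_JmomT_eqOn_zero m k (k + 1) k.lt_succ_self f hsym I J hξ
end

section
/- Let ψ ∈ C^∞(ℝⁿ×(ℝⁿ∖{0})) satisfy J_{ij}J̃ψ = 0 for all indices i,j, where J̃ = J_{i₁j₁}⋯J_{i_{m+1}j_{m+1}} is a product of John operators, and suppose J̃ψ(x,·) is positively homogeneous of degree −(m+2) in ξ. Then J̃ ∘ ((1/(m+1)) ∂/∂ξ^i ⟨ξ,∂_x⟩ + ∂/∂x^i)ψ = 0 for every index i. -/
section Aux
open Topology
variable {n : ℕ}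
abbrev EE (n : ℕ) := (Fin n → ℝ) × (Fin n → ℝ)
noncomputable def DD (n : ℕ) (v : EE n) (f : EE n → ℝ) : EE n → ℝ := fun p => fderiv ℝ f p v

lemma DD_smooth {U : Set (EE n)} (hU : IsOpen U) {f : EE n → ℝ}
    (hf : ContDiffOn ℝ (⊤ : ℕ∞) f U) (v : EE n) : ContDiffOn ℝ (⊤ : ℕ∞) (DD n v f) U := by
  have h1 : ContDiffOn ℝ (⊤ : ℕ∞) (fun p => fderiv ℝ f p) U :=
    hf.fderiv_of_isOpen hU (by simp)
  exact (ContinuousLinearMap.apply ℝ ℝ v).contDiff.comp_contDiffOn h1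

lemma contDiffAt_of_mem {U : Set (EE n)} (hU : IsOpen U) {f : EE n → ℝ}
    (hf : ContDiffOn ℝ (⊤:ℕ∞) f U) {p : EE n} (hp : p ∈ U) : ContDiffAt ℝ (⊤:ℕ∞) f p :=
  (hf p hp).contDiffAt (hU.mem_nhds hp)

lemma fderiv_DD {U : Set (EE n)} (hU : IsOpen U) {f : EE n → ℝ}
    (hf : ContDiffOn ℝ (⊤:ℕ∞) f U) {p : EE n} (hp : p ∈ U) (v w : EE n) :
    DD n v (DD n w f) p = fderiv ℝ (fderiv ℝ f) p v w := by
  have hdf : DifferentiableAt ℝ (fderiv ℝ f) p := by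
    have := (hf.fderiv_of_isOpen hU (m := (⊤:ℕ∞)) (by simp)) p hp
    exact (this.contDiffAt (hU.mem_nhds hp)).differentiableAt (by simp)
  have : DD n v (DD n w f) p
      = fderiv ℝ ((ContinuousLinearMap.apply ℝ ℝ w) ∘ (fderiv ℝ f)) p v := rfl
  rw [this, fderiv_comp p (ContinuousLinearMap.apply ℝ ℝ w).differentiableAt hdf]
  simp

lemma DD_swap {U : Set (EE n)} (hU : IsOpen U) {f : EE n → ℝ}
    (hf : ContDiffOn ℝ (⊤:ℕ∞) f U) {p : EE n} (hp : p ∈ U) (v w : EE n) :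
    DD n v (DD n w f) p = DD n w (DD n v f) p := by
  rw [fderiv_DD hU hf hp v w, fderiv_DD hU hf hp w v]
  exact ((contDiffAt_of_mem hU hf hp).isSymmSndFDerivAt (by rw [minSmoothness_of_isRCLikeNormedField]; exact WithTop.coe_le_coe.mpr le_top)).eq v w

lemma DD_congr_on {U : Set (EE n)} (hU : IsOpen U) {f g : EE n → ℝ}
    (h : ∀ q ∈ U, f q = g q) {p : EE n} (hp : p ∈ U) (v : EE n) :
    DD n v f p = DD n v g p := by
  have : f =ᶠ[𝓝 p] g := by filter_upwards [hU.mem_nhds hp] with q hq using h q hq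
  unfold DD; rw [this.fderiv_eq]

lemma diffAt_of_mem {U : Set (EE n)} (hU : IsOpen U) {f : EE n → ℝ}
    (hf : ContDiffOn ℝ (⊤:ℕ∞) f U) {p : EE n} (hp : p ∈ U) : DifferentiableAt ℝ f p :=
  (contDiffAt_of_mem hU hf hp).differentiableAt (by simp)

lemma DD_add_smul {U : Set (EE n)} (hU : IsOpen U) {f g : EE n → ℝ}
    (hf : ContDiffOn ℝ (⊤:ℕ∞) f U) (hg : ContDiffOn ℝ (⊤:ℕ∞) g U) (c : ℝ)
    {p : EE n} (hp : p ∈ U) (v : EE n) :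
    DD n v (fun q => c * f q + g q) p = c * DD n v f p + DD n v g p := by
  have hfd := diffAt_of_mem hU hf hp
  have hgd := diffAt_of_mem hU hg hp
  unfold DD
  rw [fderiv_fun_add (hfd.const_mul c) hgd, fderiv_const_mul hfd c]
  simp

noncomputable def snd_clm (n : ℕ) (q : Fin n) : EE n →L[ℝ] ℝ :=
  (ContinuousLinearMap.proj q).comp (ContinuousLinearMap.snd ℝ (Fin n → ℝ) (Fin n → ℝ))

lemma sum_mul_smooth {U : Set (EE n)} {g : Fin n → EE n → ℝ}
    (hg : ∀ q, ContDiffOn ℝ (⊤:ℕ∞) (g q) U) :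
    ContDiffOn ℝ (⊤:ℕ∞) (fun r => ∑ q, r.2 q * g q r) U :=
  ContDiffOn.sum fun q _ =>
    ((snd_clm n q).contDiff.contDiffOn : ContDiffOn ℝ (⊤:ℕ∞) (fun r : EE n => r.2 q) U).mul (hg q)

lemma DD_sum_mul {U : Set (EE n)} (hU : IsOpen U) {g : Fin n → EE n → ℝ}
    (hg : ∀ q, ContDiffOn ℝ (⊤:ℕ∞) (g q) U) {p : EE n} (hp : p ∈ U) (v : EE n) :
    DD n v (fun r => ∑ q, r.2 q * g q r) p
      = ∑ q, (v.2 q * g q p + p.2 q * DD n v (g q) p) := by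
  unfold DD
  rw [fderiv_fun_sum (A := fun (q : Fin n) (r : EE n) => r.2 q * g q r) (fun q _ => ((snd_clm n q).differentiableAt).mul (diffAt_of_mem hU (hg q) hp))]
  rw [ContinuousLinearMap.sum_apply]
  congr 1; ext q
  have h1 : fderiv ℝ (fun r : EE n => r.2 q * g q r) p
      = p.2 q • fderiv ℝ (g q) p + g q p • fderiv ℝ (fun r : EE n => r.2 q) p :=
    fderiv_mul ((snd_clm n q).differentiableAt) (diffAt_of_mem hU (hg q) hp)
  rw [h1]
  have h2 : fderiv ℝ (fun r : EE n => r.2 q) p = snd_clm n q := (snd_clm n q).fderiv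
  rw [h2]
  simp [snd_clm]
  ring

noncomputable def ex (n : ℕ) (q : Fin n) : EE n := ((Pi.single q 1 : Fin n → ℝ), 0)
noncomputable def exi (n : ℕ) (q : Fin n) : EE n := (0, (Pi.single q 1 : Fin n → ℝ))

lemma john_eq (i j : Fin n) (f : EE n → ℝ) :
    john n i j f = fun p => DD n (ex n i) (DD n (exi n j) f) p
      - DD n (ex n j) (DD n (exi n i) f) p := rfl

lemma john_smooth {U : Set (EE n)} (hU : IsOpen U) {f : EE n → ℝ}
    (hf : ContDiffOn ℝ (⊤:ℕ∞) f U) (i j : Fin n) :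
    ContDiffOn ℝ (⊤:ℕ∞) (john n i j f) U := by
  rw [john_eq]
  exact (DD_smooth hU (DD_smooth hU hf _) _).sub (DD_smooth hU (DD_smooth hU hf _) _)

lemma john_congr_on {U : Set (EE n)} (hU : IsOpen U) {f g : EE n → ℝ}
    (h : ∀ q ∈ U, f q = g q) (i j : Fin n) {p : EE n} (hp : p ∈ U) :
    john n i j f p = john n i j g p := by
  rw [john_eq, john_eq]
  beta_reduce
  have h1 : ∀ v : EE n, ∀ q ∈ U, DD n v f q = DD n v g q :=
    fun v q hq => DD_congr_on hU h hq v
  rw [DD_congr_on hU (h1 (exi n j)) hp, DD_congr_on hU (h1 (exi n i)) hp]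

lemma DD_sub {U : Set (EE n)} (hU : IsOpen U) {f g : EE n → ℝ}
    (hf : ContDiffOn ℝ (⊤:ℕ∞) f U) (hg : ContDiffOn ℝ (⊤:ℕ∞) g U)
    {p : EE n} (hp : p ∈ U) (v : EE n) :
    DD n v (fun q => f q - g q) p = DD n v f p - DD n v g p := by
  unfold DD
  rw [fderiv_fun_sub (diffAt_of_mem hU hf hp) (diffAt_of_mem hU hg hp)]; simp

lemma john_add_smul {U : Set (EE n)} (hU : IsOpen U) {f g : EE n → ℝ}
    (hf : ContDiffOn ℝ (⊤:ℕ∞) f U) (hg : ContDiffOn ℝ (⊤:ℕ∞) g U) (c : ℝ)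
    (i j : Fin n) {p : EE n} (hp : p ∈ U) :
    john n i j (fun q => c * f q + g q) p = c * john n i j f p + john n i j g p := by
  rw [john_eq, john_eq, john_eq]
  beta_reduce
  have key : ∀ a b : EE n, DD n a (DD n b (fun q => c * f q + g q)) p
      = c * DD n a (DD n b f) p + DD n a (DD n b g) p := by
    intro a b
    have h1 : ∀ q ∈ U, DD n b (fun r => c * f r + g r) q
        = c * DD n b f q + DD n b g q := fun q hq => DD_add_smul hU hf hg c hq b
    rw [DD_congr_on hU h1 hp a]
    exact DD_add_smul hU (DD_smooth hU hf b) (DD_smooth hU hg b) c hp a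
  rw [key, key]; ring

lemma john_DD_comm {U : Set (EE n)} (hU : IsOpen U) {f : EE n → ℝ}
    (hf : ContDiffOn ℝ (⊤:ℕ∞) f U) (v : EE n) (i j : Fin n) {p : EE n} (hp : p ∈ U) :
    john n i j (DD n v f) p = DD n v (john n i j f) p := by
  rw [john_eq, john_eq]
  beta_reduce
  have key : ∀ a b : EE n, DD n a (DD n b (DD n v f)) p = DD n v (fun q => DD n a (DD n b f) q) p := by
    intro a b
    have h1 : ∀ q ∈ U, DD n b (DD n v f) q = DD n v (DD n b f) q :=
      fun q hq => DD_swap hU hf hq b v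
    rw [DD_congr_on hU h1 hp a]
    exact DD_swap hU (DD_smooth hU hf b) hp a v
  rw [key, key]
  exact (DD_sub hU (DD_smooth hU (DD_smooth hU hf _) _)
    (DD_smooth hU (DD_smooth hU hf _) _) hp v).symm

lemma DD_add {U : Set (EE n)} (hU : IsOpen U) {f g : EE n → ℝ}
    (hf : ContDiffOn ℝ (⊤:ℕ∞) f U) (hg : ContDiffOn ℝ (⊤:ℕ∞) g U)
    {p : EE n} (hp : p ∈ U) (v : EE n) :
    DD n v (fun q => f q + g q) p = DD n v f p + DD n v g p := by
  unfold DD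
  rw [fderiv_fun_add (diffAt_of_mem hU hf hp) (diffAt_of_mem hU hg hp)]; simp

lemma Dx_eq_s9 (f : EE n → ℝ) : Dx n f = fun r => ∑ q, r.2 q * DD n (ex n q) f r := rfl

lemma Dx_smooth {U : Set (EE n)} (hU : IsOpen U) {f : EE n → ℝ}
    (hf : ContDiffOn ℝ (⊤:ℕ∞) f U) : ContDiffOn ℝ (⊤:ℕ∞) (Dx n f) U := by
  rw [Dx_eq_s9]; exact sum_mul_smooth (fun q => DD_smooth hU hf _)

lemma john_Dx_comm {U : Set (EE n)} (hU : IsOpen U) {f : EE n → ℝ}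
    (hf : ContDiffOn ℝ (⊤:ℕ∞) f U) (i j : Fin n) {p : EE n} (hp : p ∈ U) :
    john n i j (Dx n f) p = Dx n (john n i j f) p := by
  have hA : ∀ q, ContDiffOn ℝ (⊤:ℕ∞) (DD n (ex n q) f) U := fun q => DD_smooth hU hf _
  have claim1 : ∀ (j : Fin n), ∀ p ∈ U, DD n (exi n j) (Dx n f) p
      = DD n (ex n j) f p + ∑ q, p.2 q * DD n (exi n j) (DD n (ex n q) f) p := by
    intro j p hp
    rw [Dx_eq_s9, DD_sum_mul hU hA hp (exi n j), Finset.sum_add_distrib]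
    congr 1
    simp [exi, Pi.single_apply, ite_mul]
  have claim2 : ∀ (i : Fin n) (g : Fin n → EE n → ℝ), (∀ q, ContDiffOn ℝ (⊤:ℕ∞) (g q) U) →
      DD n (ex n i) (fun r => ∑ q, r.2 q * g q r) p = ∑ q, p.2 q * DD n (ex n i) (g q) p := by
    intro i g hg
    rw [DD_sum_mul hU hg hp (ex n i)]
    simp [ex]
  have e1 : ∀ i j : Fin n, DD n (ex n i) (DD n (exi n j) (Dx n f)) p
      = DD n (ex n i) (DD n (ex n j) f) p
        + ∑ q, p.2 q * DD n (ex n i) (DD n (exi n j) (DD n (ex n q) f)) p := by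
    intro i j
    rw [DD_congr_on hU (claim1 j) hp (ex n i)]
    have hsum : ContDiffOn ℝ (⊤:ℕ∞) (fun r => ∑ q, r.2 q * DD n (exi n j) (DD n (ex n q) f) r) U :=
      sum_mul_smooth (fun q => DD_smooth hU (hA q) _)
    rw [DD_add hU (DD_smooth hU hf _) hsum hp]
    congr 1
    exact claim2 i _ (fun q => DD_smooth hU (hA q) _)
  have key : ∀ q : Fin n, DD n (ex n q) (john n i j f) p
      = DD n (ex n i) (DD n (exi n j) (DD n (ex n q) f)) p
        - DD n (ex n j) (DD n (exi n i) (DD n (ex n q) f)) p := by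
    intro q
    rw [← john_DD_comm hU hf (ex n q) i j hp]
    rfl
  have hDx : Dx n (john n i j f) p = ∑ q, p.2 q * DD n (ex n q) (john n i j f) p := rfl
  have hswap := DD_swap hU hf hp (ex n i) (ex n j)
  have hlhs : john n i j (Dx n f) p
      = DD n (ex n i) (DD n (exi n j) (Dx n f)) p
        - DD n (ex n j) (DD n (exi n i) (Dx n f)) p := rfl
  rw [hlhs, e1 i j, e1 j i, hDx]
  have hsum : ∑ q : Fin n, p.2 q * DD n (ex n q) (john n i j f) p
      = (∑ q : Fin n, p.2 q * DD n (ex n i) (DD n (exi n j) (DD n (ex n q) f)) p)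
        - ∑ q : Fin n, p.2 q * DD n (ex n j) (DD n (exi n i) (DD n (ex n q) f)) p := by
    rw [← Finset.sum_sub_distrib]
    exact Finset.sum_congr rfl fun q _ => by rw [key q, mul_sub]
  rw [hsum, hswap]
  ring

noncomputable def AL (n : ℕ) (L : List (Fin n × Fin n)) (f : EE n → ℝ) : EE n → ℝ :=
  L.foldr (fun ab acc => john n ab.1 ab.2 acc) f

lemma iterJohn_eq_AL (r : ℕ) (I J : Fin r → Fin n) (f : EE n → ℝ) :
    iterJohn n r I J f = AL n ((List.finRange r).map fun a => (I a, J a)) f := by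
  unfold iterJohn AL
  rw [List.foldr_map]

lemma AL_smooth {U : Set (EE n)} (hU : IsOpen U) (L : List (Fin n × Fin n)) {f : EE n → ℝ}
    (hf : ContDiffOn ℝ (⊤:ℕ∞) f U) : ContDiffOn ℝ (⊤:ℕ∞) (AL n L f) U := by
  induction L with
  | nil => exact hf
  | cons ab L ih => exact john_smooth hU ih ab.1 ab.2

lemma AL_congr_on {U : Set (EE n)} (hU : IsOpen U) (L : List (Fin n × Fin n)) {f g : EE n → ℝ}
    (h : ∀ q ∈ U, f q = g q) : ∀ p ∈ U, AL n L f p = AL n L g p := by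
  induction L with
  | nil => exact h
  | cons ab L ih => exact fun p hp => john_congr_on hU ih ab.1 ab.2 hp

lemma AL_add_smul {U : Set (EE n)} (hU : IsOpen U) (L : List (Fin n × Fin n)) {f g : EE n → ℝ}
    (hf : ContDiffOn ℝ (⊤:ℕ∞) f U) (hg : ContDiffOn ℝ (⊤:ℕ∞) g U) (c : ℝ) :
    ∀ p ∈ U, AL n L (fun q => c * f q + g q) p = c * AL n L f p + AL n L g p := by
  induction L with
  | nil => exact fun p _ => rfl
  | cons ab L ih =>
    intro p hp
    have h1 : AL n (ab :: L) (fun q => c * f q + g q) p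
        = john n ab.1 ab.2 (fun q => c * AL n L f q + AL n L g q) p :=
      john_congr_on hU ih ab.1 ab.2 hp
    rw [h1]
    exact john_add_smul hU (AL_smooth hU L hf) (AL_smooth hU L hg) c ab.1 ab.2 hp

lemma AL_DD_comm {U : Set (EE n)} (hU : IsOpen U) (L : List (Fin n × Fin n)) {f : EE n → ℝ}
    (hf : ContDiffOn ℝ (⊤:ℕ∞) f U) (v : EE n) :
    ∀ p ∈ U, AL n L (DD n v f) p = DD n v (AL n L f) p := by
  induction L with
  | nil => exact fun p _ => rfl
  | cons ab L ih =>
    intro p hp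
    have h1 : AL n (ab :: L) (DD n v f) p = john n ab.1 ab.2 (DD n v (AL n L f)) p :=
      john_congr_on hU ih ab.1 ab.2 hp
    rw [h1]
    exact john_DD_comm hU (AL_smooth hU L hf) v ab.1 ab.2 hp

lemma AL_Dx_comm {U : Set (EE n)} (hU : IsOpen U) (L : List (Fin n × Fin n)) {f : EE n → ℝ}
    (hf : ContDiffOn ℝ (⊤:ℕ∞) f U) :
    ∀ p ∈ U, AL n L (Dx n f) p = Dx n (AL n L f) p := by
  induction L with
  | nil => exact fun p _ => rfl
  | cons ab L ih =>
    intro p hp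
    have h1 : AL n (ab :: L) (Dx n f) p = john n ab.1 ab.2 (Dx n (AL n L f)) p :=
      john_congr_on hU ih ab.1 ab.2 hp
    rw [h1]
    exact john_Dx_comm hU (AL_smooth hU L hf) ab.1 ab.2 hp

lemma DD_exi_Dx {U : Set (EE n)} (hU : IsOpen U) {f : EE n → ℝ}
    (hf : ContDiffOn ℝ (⊤:ℕ∞) f U) (j : Fin n) {p : EE n} (hp : p ∈ U) :
    DD n (exi n j) (Dx n f) p
      = DD n (ex n j) f p + ∑ q, p.2 q * DD n (exi n j) (DD n (ex n q) f) p := by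
  rw [Dx_eq_s9, DD_sum_mul hU (fun q => DD_smooth hU hf _) hp (exi n j), Finset.sum_add_distrib]
  congr 1
  simp [exi, Pi.single_apply, ite_mul]

lemma DD_ex_sum {U : Set (EE n)} (hU : IsOpen U) (i : Fin n) {g : Fin n → EE n → ℝ}
    (hg : ∀ q, ContDiffOn ℝ (⊤:ℕ∞) (g q) U) {p : EE n} (hp : p ∈ U) :
    DD n (ex n i) (fun r => ∑ q, r.2 q * g q r) p = ∑ q, p.2 q * DD n (ex n i) (g q) p := by
  rw [DD_sum_mul hU hg hp (ex n i)]
  simp [ex]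

lemma DD_const_mul {U : Set (EE n)} (hU : IsOpen U) {f : EE n → ℝ}
    (hf : ContDiffOn ℝ (⊤:ℕ∞) f U) (c : ℝ) {p : EE n} (hp : p ∈ U) (v : EE n) :
    DD n v (fun q => c * f q) p = c * DD n v f p := by
  unfold DD
  rw [fderiv_const_mul (diffAt_of_mem hU hf hp) c]; simp

lemma euler (m : ℕ) {φ : EE n → ℝ}
    (hφ : ContDiffOn ℝ (⊤:ℕ∞) φ {p : EE n | p.2 ≠ 0})
    (hhom : ∀ t : ℝ, 0 < t → ∀ x ξ : Fin n → ℝ, ξ ≠ 0 →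
      φ (x, t • ξ) = (t ^ (m + 2))⁻¹ * φ (x, ξ))
    {p : EE n} (hp : p.2 ≠ 0) :
    ∑ q, p.2 q * DD n (exi n q) φ p = -((m:ℝ) + 2) * φ p := by
  have hU : IsOpen {p : EE n | p.2 ≠ 0} := isOpen_compl_singleton.preimage continuous_snd
  have hdφ : DifferentiableAt ℝ φ p := diffAt_of_mem hU hφ hp
  -- Step A: fderiv φ p (0, p.2) = -(m+2) * φ p
  set c : ℝ → EE n := fun t => ((p.1, (0 : Fin n → ℝ)) : EE n) + t • (((0 : Fin n → ℝ), p.2) : EE n) with hc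
  have hc1 : c 1 = p := by simp [hc]
  have hcd : HasDerivAt c (((0 : Fin n → ℝ), p.2) : EE n) 1 := by
    have h1 : HasDerivAt (fun t : ℝ => t • (((0 : Fin n → ℝ), p.2) : EE n))
        ((1:ℝ) • (((0 : Fin n → ℝ), p.2) : EE n)) 1 :=
      (hasDerivAt_id 1).smul_const _
    simpa [hc] using h1.const_add ((p.1, (0 : Fin n → ℝ)) : EE n)
  have h1 : HasDerivAt (fun t => φ (c t)) (fderiv ℝ φ p ((0 : Fin n → ℝ), p.2)) 1 := by
    have hF : HasFDerivAt φ (fderiv ℝ φ p) (c 1) := hc1.symm ▸ hdφ.hasFDerivAt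
    exact hF.comp_hasDerivAt 1 hcd
  have h2 : HasDerivAt (fun t : ℝ => (t ^ (m + 2))⁻¹ * φ p) (-((m:ℝ) + 2) * φ p) 1 := by
    have hpow : HasDerivAt (fun t : ℝ => t ^ (m + 2)) (((m:ℝ) + 2) * 1 ^ (m + 1)) 1 := by
      simpa [Nat.cast_add] using hasDerivAt_pow (m + 2) (1:ℝ)
    have hinv := hpow.inv (by norm_num)
    have := hinv.mul_const (φ p)
    exact this.congr_deriv (by norm_num)
  have heq : (fun t => φ (c t)) =ᶠ[𝓝 (1:ℝ)] fun t : ℝ => (t ^ (m + 2))⁻¹ * φ p := by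
    filter_upwards [isOpen_Ioi.mem_nhds (show (0:ℝ) < 1 by norm_num)] with t ht
    have : φ (c t) = φ (p.1, t • p.2) := by simp [hc]
    rw [this, hhom t ht p.1 p.2 hp]
  have h1' : HasDerivAt (fun t : ℝ => (t ^ (m + 2))⁻¹ * φ p)
      (fderiv ℝ φ p ((0 : Fin n → ℝ), p.2)) 1 := h1.congr_of_eventuallyEq heq.symm
  have hA : fderiv ℝ φ p ((0 : Fin n → ℝ), p.2) = -((m:ℝ) + 2) * φ p := h1'.unique h2
  -- Step B: expand the direction
  have hvec : (((0 : Fin n → ℝ), p.2) : EE n) = ∑ q, p.2 q • exi n q := by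
    ext j
    · simp [exi, Prod.fst_sum]
    · simp [exi, Prod.snd_sum, Pi.single_apply, Finset.sum_ite_eq]
  calc ∑ q, p.2 q * DD n (exi n q) φ p = fderiv ℝ φ p ((0 : Fin n → ℝ), p.2) := by
        rw [hvec, map_sum]
        exact Finset.sum_congr rfl fun q _ => by
          rw [ContinuousLinearMap.map_smul]; rfl
    _ = -((m:ℝ) + 2) * φ p := hA

end Aux

/-- Step in the proof of the Main Lemma: if `J_{ij} J̃ ψ = 0` for all `i, j`, where
`J̃ = J_{i₁j₁}⋯J_{i_{m+1}j_{m+1}}`, and `J̃ψ` is positively homogeneous of degree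
`−(m+2)` in `ξ`, then `J̃((1/(m+1)) ∂/∂ξ^i ⟨ξ,∂ₓ⟩ + ∂/∂x^i)ψ = 0` for every `i`. -/
theorem stmt9 (n m : ℕ) (ψ : (Fin n → ℝ) × (Fin n → ℝ) → ℝ)
    (hψ : ContDiffOn ℝ (⊤ : ℕ∞) ψ {p | p.2 ≠ 0})
    (I J : Fin (m + 1) → Fin n)
    (hJohn : ∀ i j : Fin n, ∀ x ξ : Fin n → ℝ, ξ ≠ 0 →
      john n i j (iterJohn n (m + 1) I J ψ) (x, ξ) = 0)
    (hhom : ∀ (t : ℝ), 0 < t → ∀ x ξ : Fin n → ℝ, ξ ≠ 0 →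
      iterJohn n (m + 1) I J ψ (x, t • ξ)
        = (t ^ (m + 2))⁻¹ * iterJohn n (m + 1) I J ψ (x, ξ)) :
    ∀ i : Fin n, ∀ x ξ : Fin n → ℝ, ξ ≠ 0 →
      iterJohn n (m + 1) I J
        (fun p => ((m : ℝ) + 1)⁻¹ * pdxi n i (Dx n ψ) p + pdx n i ψ p) (x, ξ) = 0 := by
  intro i x ξ hξ
  have hU : IsOpen {p : EE n | p.2 ≠ 0} := isOpen_compl_singleton.preimage continuous_snd
  set U : Set (EE n) := {p : EE n | p.2 ≠ 0} with hUdef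
  have hψ' : ContDiffOn ℝ (⊤:ℕ∞) ψ U := hψ.of_le (by simp)
  set L : List (Fin n × Fin n) := (List.finRange (m+1)).map fun a => (I a, J a) with hL
  set φ : EE n → ℝ := AL n L ψ with hφdef
  have hiter : iterJohn n (m + 1) I J ψ = φ := iterJohn_eq_AL (m+1) I J ψ
  have hφ : ContDiffOn ℝ (⊤:ℕ∞) φ U := AL_smooth hU L hψ'
  set p : EE n := (x, ξ) with hpdef
  have hp : p ∈ U := hξ
  -- rewrite the goal
  rw [iterJohn_eq_AL]
  -- linearity
  have hf1 : ContDiffOn ℝ (⊤:ℕ∞) (pdxi n i (Dx n ψ)) U :=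
    DD_smooth hU (Dx_smooth hU hψ') (exi n i)
  have hf2 : ContDiffOn ℝ (⊤:ℕ∞) (pdx n i ψ) U := DD_smooth hU hψ' (ex n i)
  have step1 : AL n L (fun p => ((m : ℝ) + 1)⁻¹ * pdxi n i (Dx n ψ) p + pdx n i ψ p) p
      = ((m : ℝ) + 1)⁻¹ * AL n L (pdxi n i (Dx n ψ)) p + AL n L (pdx n i ψ) p :=
    AL_add_smul hU L hf1 hf2 _ p hp
  have step2 : AL n L (pdx n i ψ) p = DD n (ex n i) φ p :=
    AL_DD_comm hU L hψ' (ex n i) p hp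
  have step3 : AL n L (pdxi n i (Dx n ψ)) p = DD n (exi n i) (AL n L (Dx n ψ)) p :=
    AL_DD_comm hU L (Dx_smooth hU hψ') (exi n i) p hp
  have step4 : DD n (exi n i) (AL n L (Dx n ψ)) p = DD n (exi n i) (Dx n φ) p :=
    DD_congr_on hU (AL_Dx_comm hU L hψ') hp (exi n i)
  have step5 : DD n (exi n i) (Dx n φ) p
      = DD n (ex n i) φ p + ∑ q, p.2 q * DD n (exi n i) (DD n (ex n q) φ) p :=
    DD_exi_Dx hU hφ i hp
  -- John hypothesis: swap indices
  have hJ : ∀ a b : Fin n, ∀ r ∈ U, DD n (ex n a) (DD n (exi n b) φ) r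
      = DD n (ex n b) (DD n (exi n a) φ) r := by
    intro a b r hr
    have h0 : john n a b φ r = 0 := by
      have := hJohn a b r.1 r.2 hr
      rwa [hiter, Prod.mk.eta] at this
    have : DD n (ex n a) (DD n (exi n b) φ) r - DD n (ex n b) (DD n (exi n a) φ) r = 0 := h0
    linarith
  have step6 : ∀ q : Fin n, DD n (exi n i) (DD n (ex n q) φ) p
      = DD n (ex n i) (DD n (exi n q) φ) p := by
    intro q
    rw [DD_swap hU hφ hp (exi n i) (ex n q)]
    exact hJ q i p hp
  have step7 : ∑ q, p.2 q * DD n (ex n i) (DD n (exi n q) φ) p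
      = DD n (ex n i) (fun r => ∑ q, r.2 q * DD n (exi n q) φ r) p :=
    (DD_ex_sum hU i (fun q => DD_smooth hU hφ _) hp).symm
  -- Euler
  have hhomφ : ∀ t : ℝ, 0 < t → ∀ x ξ : Fin n → ℝ, ξ ≠ 0 →
      φ (x, t • ξ) = (t ^ (m + 2))⁻¹ * φ (x, ξ) := by
    intro t ht x ξ hξ
    have := hhom t ht x ξ hξ
    rwa [hiter] at this
  have step8 : DD n (ex n i) (fun r => ∑ q, r.2 q * DD n (exi n q) φ r) p
      = DD n (ex n i) (fun r => (-((m:ℝ) + 2)) * φ r) p :=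
    DD_congr_on hU (fun r hr => euler m hφ hhomφ hr) hp (ex n i)
  have step9 : DD n (ex n i) (fun r => (-((m:ℝ) + 2)) * φ r) p
      = (-((m:ℝ) + 2)) * DD n (ex n i) φ p :=
    DD_const_mul hU hφ _ hp (ex n i)
  rw [step1, step2, step3, step4, step5]
  rw [Finset.sum_congr rfl (fun q _ => by rw [step6 q]), step7, step8, step9]
  have hm1 : (m : ℝ) + 1 ≠ 0 := by positivity
  field_simp
  ring
end

section
/- With ψ^k defined as in the standard extension formula from φ^0,…,φ^k (i.e. ψ^k(x,ξ) = |ξ|^{m−2k−1} Σ_{ℓ=0}^{k} (−1)^{k−ℓ} C(k,ℓ) |ξ|^ℓ ⟨ξ,x⟩^{k−ℓ} φ^ℓ(x − (⟨ξ,x⟩/|ξ|²)ξ, ξ/|ξ|)), one has the shift identity ψ^k(x+tξ, ξ) = Σ_{ℓ=0}^{k} C(k,ℓ)(−t)^{k−ℓ} ψ^ℓ(x,ξ) for every real t, every x ∈ ℝⁿ and every ξ ≠ 0. -/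
open scoped RealInnerProductSpace

/-- The extension `ψ^k` of the data `(φ^0,…,φ^k)` to `ℝⁿ×(ℝⁿ∖{0})` (formula (1.14)):
`ψ^k(x,ξ) = |ξ|^{m−2k−1} Σ_{ℓ=0}^k (−1)^{k−ℓ} C(k,ℓ) |ξ|^ℓ ⟨ξ,x⟩^{k−ℓ}
  φ^ℓ(x − (⟨ξ,x⟩/|ξ|²)ξ, ξ/|ξ|)`. -/
noncomputable def psiExt (n m : ℕ)
    (φ : ℕ → EuclideanSpace ℝ (Fin n) × EuclideanSpace ℝ (Fin n) → ℝ) (k : ℕ) :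
    EuclideanSpace ℝ (Fin n) × EuclideanSpace ℝ (Fin n) → ℝ :=
  fun p => ‖p.2‖ ^ ((m : ℤ) - 2 * k - 1) *
    ∑ ℓ ∈ Finset.range (k + 1),
      (-1 : ℝ) ^ (k - ℓ) * (k.choose ℓ : ℝ) * ‖p.2‖ ^ ℓ * ⟪p.2, p.1⟫ ^ (k - ℓ) *
        φ ℓ (p.1 - (⟪p.2, p.1⟫ / ‖p.2‖ ^ 2) • p.2, ‖p.2‖⁻¹ • p.2)

/-!
Write `x = y + σ ξ` with `y ⟂ ξ`, so `σ = ⟨ξ,x⟩/|ξ|²`. Then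
`ψ^k(x,ξ) = |ξ|^{m-1} Σ_ℓ C(k,ℓ) (-σ)^{k-ℓ} a_ℓ` with `a_ℓ = |ξ|^{-ℓ} φ^ℓ(y, ξ/|ξ|)`, i.e. `ψ^k`
is the binomial shift by `-σ` of a sequence that depends only on `y` and `ξ`. Replacing `x` by
`x + tξ` keeps `y` and turns `σ` into `σ + t`, and binomial shifts compose additively
(`C(k,ℓ) C(ℓ,j) = C(k,j) C(k-j,ℓ-j)` plus the binomial theorem).
-/

open Finset

section
variable {R : Type*} [CommSemiring R]

def binomialShift (c : R) (a : ℕ → R) (k : ℕ) : R :=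
  ∑ ℓ ∈ range (k + 1), (k.choose ℓ : R) * c ^ (k - ℓ) * a ℓ

theorem binomialShift_add (c d : R) (a : ℕ → R) (k : ℕ) :
    binomialShift (c + d) a k = binomialShift c (binomialShift d a) k := by
  have swap : binomialShift c (binomialShift d a) k = ∑ j ∈ range (k + 1),
      ∑ ℓ ∈ Ico j (k + 1), (k.choose ℓ : R) * c ^ (k - ℓ) * ((ℓ.choose j) * d ^ (ℓ - j) * a j) := by
    simp only [binomialShift, mul_sum]
    exact sum_comm' fun ℓ j => by simp only [mem_range, mem_Ico]; omega
  rw [swap, binomialShift]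
  refine sum_congr rfl fun j hj => ?_
  have hjk : j ≤ k := Nat.lt_succ_iff.mp (mem_range.mp hj)
  rw [sum_Ico_eq_sum_range, show k + 1 - j = k - j + 1 by omega, add_comm c, add_pow, mul_sum,
    sum_mul]
  refine sum_congr rfl fun i _ => ?_
  have hchoose : (k.choose (j + i) : R) * ((j + i).choose j) = k.choose j * (k - j).choose i := by
    rw [← Nat.cast_mul, ← Nat.cast_mul, Nat.choose_mul (Nat.le_add_right j i),
      Nat.add_sub_cancel_left]
  rw [Nat.add_sub_cancel_left, ← Nat.sub_sub]
  calc _ = (k.choose j * (k - j).choose i : R) * (c ^ (k - j - i) * d ^ i * a j) := by ring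
    _ = _ := by rw [← hchoose]; ring

end

section
variable {E : Type*} [NormedAddCommGroup E] [InnerProductSpace ℝ E]

theorem inner_add_smul_div_norm_sq {ξ : E} (hξ : ξ ≠ 0) (x : E) (t : ℝ) :
    ⟪ξ, x + t • ξ⟫ / ‖ξ‖ ^ 2 = ⟪ξ, x⟫ / ‖ξ‖ ^ 2 + t := by
  have : ‖ξ‖ ≠ 0 := norm_ne_zero_iff.mpr hξ
  rw [inner_add_right, real_inner_smul_right, real_inner_self_eq_norm_sq]
  field_simp

end

theorem psiExt_eq_binomialShift {n : ℕ} (m : ℕ)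
    (φ : ℕ → EuclideanSpace ℝ (Fin n) × EuclideanSpace ℝ (Fin n) → ℝ) (k : ℕ)
    (x : EuclideanSpace ℝ (Fin n)) {ξ : EuclideanSpace ℝ (Fin n)} (hξ : ξ ≠ 0) :
    psiExt n m φ k (x, ξ) = ‖ξ‖ ^ ((m : ℤ) - 1) * binomialShift (-(⟪ξ, x⟫ / ‖ξ‖ ^ 2))
      (fun ℓ => ‖ξ‖ ^ (-(ℓ : ℤ)) * φ ℓ (x - (⟪ξ, x⟫ / ‖ξ‖ ^ 2) • ξ, ‖ξ‖⁻¹ • ξ)) k := by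
  have hr : ‖ξ‖ ≠ 0 := norm_ne_zero_iff.mpr hξ
  rw [psiExt, binomialShift, mul_sum, mul_sum]
  refine sum_congr rfl fun ℓ hℓ => ?_
  have hℓk : ℓ ≤ k := Nat.lt_succ_iff.mp (mem_range.mp hℓ)
  have hpow : ‖ξ‖ ^ ((m : ℤ) - 2 * k - 1) * ‖ξ‖ ^ ℓ
      = ‖ξ‖ ^ ((m : ℤ) - 1) * ‖ξ‖ ^ (-(ℓ : ℤ)) * ((‖ξ‖ ^ 2) ^ (k - ℓ))⁻¹ := by
    rw [← pow_mul, ← zpow_natCast, ← zpow_natCast, ← zpow_neg, ← zpow_add₀ hr, ← zpow_add₀ hr,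
      ← zpow_add₀ hr]
    congr 1
    push_cast [hℓk]
    ring
  dsimp only
  linear_combination (-1) ^ (k - ℓ) * (k.choose ℓ : ℝ) * ⟪ξ, x⟫ ^ (k - ℓ) *
    φ ℓ (x - (⟪ξ, x⟫ / ‖ξ‖ ^ 2) • ξ, ‖ξ‖⁻¹ • ξ) * hpow

/-- Statement 2.6 (second part): the extensions `ψ^k` satisfy the shift identity
`ψ^k(x+tξ,ξ) = Σ_{ℓ=0}^k C(k,ℓ) (−t)^{k−ℓ} ψ^ℓ(x,ξ)`. -/
theorem stmt13 (n m : ℕ)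
    (φ : ℕ → EuclideanSpace ℝ (Fin n) × EuclideanSpace ℝ (Fin n) → ℝ) :
    ∀ k ≤ m, ∀ (t : ℝ) (x ξ : EuclideanSpace ℝ (Fin n)), ξ ≠ 0 →
      psiExt n m φ k (x + t • ξ, ξ)
        = ∑ ℓ ∈ Finset.range (k + 1),
            (k.choose ℓ : ℝ) * (-t) ^ (k - ℓ) * psiExt n m φ ℓ (x, ξ) := by
  intro k _ t x ξ hξ
  have hproj : x + t • ξ - (⟪ξ, x⟫ / ‖ξ‖ ^ 2 + t) • ξ = x - (⟪ξ, x⟫ / ‖ξ‖ ^ 2) • ξ := by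
    rw [add_smul]
    abel
  rw [psiExt_eq_binomialShift m φ k _ hξ, inner_add_smul_div_norm_sq hξ, hproj, neg_add, add_comm,
    binomialShift_add, binomialShift, mul_sum]
  refine sum_congr rfl fun ℓ _ => ?_
  rw [psiExt_eq_binomialShift m φ ℓ x hξ]
  ring
end
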